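/- arXiv:0810.4086 — 5 statements merged into one kernel-verified Lean document; each statement's English description precedes it below -/
import Mathlib

section
/- There exists an invertible measure-preserving transformation ρ of ([0,1], λ), where λ is Lebesgue measure, such that for every integer n ≥ 1 there is a measurable set c ⊆ [0,1] such that (c, ρ) generates an n-partition, i.e. the sets c, ρ(c), …, ρⁿ⁻¹(c) are pairwise disjoint up to λ-null sets and their union has measure 1. -/
open MeasureTheory Set
open scoped Classical
open scoped unitInterval


/-- `(c, T)` generates an `n`-partition (with respect to the measure `μ`) if the sets
`c, T(c), …, Tⁿ⁻¹(c)` are pairwise disjoint up to `μ`-null sets and their union has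
measure `1`. -/
def GeneratesNPartition {X : Type*} [MeasurableSpace X] (μ : Measure X) (T : X → X)
    (c : Set X) (n : ℕ) : Prop :=
  MeasurableSet c ∧
    (∀ i < n, ∀ j < n, i ≠ j → μ (T^[i] '' c ∩ T^[j] '' c) = 0) ∧
    μ (⋃ i < n, T^[i] '' c) = 1

namespace OdometerConstruction

noncomputable section

/-- `Pn k = (k+1)!`, the mixed-radix denominators. -/
def Pn (k : ℕ) : ℕ := Nat.factorial (k + 1)

lemma Pn_pos (k : ℕ) : 0 < Pn k := Nat.factorial_pos _

lemma Pn_zero : Pn 0 = 1 := rfl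

lemma Pn_succ (k : ℕ) : Pn (k + 1) = (k + 2) * Pn k := rfl

lemma Pn_mono {k l : ℕ} (h : k ≤ l) : Pn k ≤ Pn l :=
  Nat.factorial_le (by omega)

lemma Pn_dvd {k l : ℕ} (h : k ≤ l) : Pn k ∣ Pn l :=
  Nat.factorial_dvd_factorial (by omega)

lemma Pn_cast_pos (k : ℕ) : (0:ℝ) < (Pn k : ℝ) := by exact_mod_cast Pn_pos k

lemma one_le_Pn_cast (k : ℕ) : (1:ℝ) ≤ (Pn k : ℝ) := by exact_mod_cast Pn_pos k

/-- left endpoints of the towers -/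
def a (k : ℕ) : ℝ := 1 - 1 / (Pn k)

lemma a_zero : a 0 = 0 := by simp [a, Pn_zero]

lemma a_nonneg (k : ℕ) : 0 ≤ a k := by
  have h1 := one_le_Pn_cast k
  have : 1 / (Pn k : ℝ) ≤ 1 := by
    rw [div_le_one (Pn_cast_pos k)]; exact h1
  simp only [a]; linarith

lemma a_lt_one (k : ℕ) : a k < 1 := by
  have := Pn_cast_pos k
  have : 0 < 1 / (Pn k : ℝ) := by positivity
  simp only [a]; linarith

lemma a_mono {k l : ℕ} (h : k ≤ l) : a k ≤ a l := by
  have : (1:ℝ) / Pn l ≤ 1 / Pn k := by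
    apply one_div_le_one_div_of_le (Pn_cast_pos k)
    exact_mod_cast Pn_mono h
  simp only [a]; linarith

/-- the domain pieces -/
def A (k : ℕ) : Set ℝ := Ico (a k) (a (k + 1))

/-- the image pieces -/
def B (k : ℕ) : Set ℝ := Ico ((1:ℝ) / Pn (k + 1)) (1 / Pn k)

/-- translation amounts -/
def t (k : ℕ) : ℝ := 1 / Pn k + 1 / Pn (k + 1) - 1

lemma mem_A_iff {x : ℝ} {k : ℕ} : x ∈ A k ↔ x + t k ∈ B k := by
  simp only [A, B, t, a, mem_Ico]
  constructor <;> intro h <;> constructor <;> linarith [h.1, h.2]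

lemma A_subset (k : ℕ) : A k ⊆ Ico (0:ℝ) 1 := fun x hx =>
  ⟨le_trans (a_nonneg k) hx.1, lt_of_lt_of_le hx.2 (a_lt_one (k+1)).le⟩

lemma B_subset (k : ℕ) : B k ⊆ Ioo (0:ℝ) 1 := fun x hx => by
  have hp : (0:ℝ) < 1 / Pn (k+1) := by have := Pn_cast_pos (k+1); positivity
  refine ⟨lt_of_lt_of_le hp hx.1, lt_of_lt_of_le hx.2 ?_⟩
  rw [div_le_one (Pn_cast_pos k)]; exact one_le_Pn_cast k

lemma A_disjoint : Pairwise (Function.onFun Disjoint A) := by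
  intro k l hkl
  wlog h : k < l generalizing k l
  · exact (this hkl.symm (by omega)).symm
  simp only [Function.onFun, Set.disjoint_left]
  intro x hx hx'
  have h1 : x < a (k+1) := hx.2
  have h2 : a l ≤ x := hx'.1
  have := a_mono (show k + 1 ≤ l by omega)
  linarith

lemma B_disjoint : Pairwise (Function.onFun Disjoint B) := by
  intro k l hkl
  wlog h : k < l generalizing k l
  · exact (this hkl.symm (by omega)).symm
  simp only [Function.onFun, Set.disjoint_left]
  intro x hx hx'
  have h1 : (1:ℝ) / Pn (k+1) ≤ x := hx.1
  have h2 : x < 1 / Pn l := hx'.2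
  have : (1:ℝ) / Pn l ≤ 1 / Pn (k+1) := by
    apply one_div_le_one_div_of_le (Pn_cast_pos (k+1))
    exact_mod_cast Pn_mono (show k + 1 ≤ l by omega)
  linarith

lemma exists_lt_a {x : ℝ} (hx : x < 1) : ∃ k, x < a (k + 1) := by
  obtain ⟨N, hN⟩ := exists_nat_gt (1 / (1 - x))
  refine ⟨N, ?_⟩
  have hx1 : 0 < 1 - x := by linarith
  have hN0 : (0:ℝ) < N := lt_trans (by positivity) hN
  have h1 : 1 / (N:ℝ) < 1 - x := by
    rw [div_lt_iff₀ hN0]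
    rw [div_lt_iff₀ hx1] at hN
    linarith [mul_comm (1-x) (N:ℝ)]
  have h2 : (1:ℝ) / Pn (N + 1) ≤ 1 / N := by
    apply one_div_le_one_div_of_le hN0
    exact_mod_cast le_trans (show N ≤ N + 2 by omega) (Nat.self_le_factorial _)
  simp only [a]; linarith

/-- index of the piece containing `x` -/
def idx (x : ℝ) : ℕ := if h : ∃ k, x < a (k + 1) then Nat.find h else 0

lemma mem_A_idx {x : ℝ} (h0 : 0 ≤ x) (h1 : x < 1) : x ∈ A (idx x) := by
  have h : ∃ k, x < a (k + 1) := exists_lt_a h1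
  rw [idx, dif_pos h]
  refine ⟨?_, Nat.find_spec h⟩
  rcases Nat.eq_zero_or_pos (Nat.find h) with he | hp
  · rw [he, a_zero]; exact h0
  · have := Nat.find_min h (show Nat.find h - 1 < Nat.find h by omega)
    have heq : Nat.find h - 1 + 1 = Nat.find h := by omega
    rw [heq] at this
    linarith [not_lt.mp this]

lemma idx_eq {x : ℝ} {k : ℕ} (hx : x ∈ A k) : idx x = k := by
  have hx0 : 0 ≤ x := (A_subset k hx).1
  have hx1 : x < 1 := (A_subset k hx).2
  by_contra hne
  exact Set.disjoint_left.mp (A_disjoint hne) (mem_A_idx hx0 hx1) hx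

/-- index of the image piece containing `y` -/
def jdx (y : ℝ) : ℕ := if h : ∃ k, (1:ℝ) / Pn (k + 1) ≤ y then Nat.find h else 0

lemma mem_B_jdx {y : ℝ} (h0 : 0 < y) (h1 : y < 1) : y ∈ B (jdx y) := by
  have h : ∃ k, (1:ℝ) / Pn (k + 1) ≤ y := by
    obtain ⟨N, hN⟩ := exists_nat_gt (1 / y)
    have hN0 : (0:ℝ) < N := lt_trans (by positivity) hN
    refine ⟨N, le_trans (show (1:ℝ) / Pn (N+1) ≤ 1 / N from ?_) ?_⟩
    · apply one_div_le_one_div_of_le hN0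
      exact_mod_cast le_trans (show N ≤ N + 2 by omega) (Nat.self_le_factorial _)
    · rw [div_le_iff₀ hN0]
      rw [div_lt_iff₀ h0] at hN
      nlinarith
  rw [jdx, dif_pos h]
  refine ⟨Nat.find_spec h, ?_⟩
  rcases Nat.eq_zero_or_pos (Nat.find h) with he | hp
  · rw [he]; simpa [Pn_zero] using h1
  · have := Nat.find_min h (show Nat.find h - 1 < Nat.find h by omega)
    have heq : Nat.find h - 1 + 1 = Nat.find h := by omega
    rw [heq] at this
    linarith [not_le.mp this]

lemma jdx_eq {y : ℝ} {k : ℕ} (hy : y ∈ B k) : jdx y = k := by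
  have h0 : 0 < y := (B_subset k hy).1
  have h1 : y < 1 := (B_subset k hy).2
  by_contra hne
  exact Set.disjoint_left.mp (B_disjoint hne) (mem_B_jdx h0 h1) hy

/-- the odometer, defined on `[0,1)` -/
def T (x : ℝ) : ℝ := x + t (idx x)

def Tinv (y : ℝ) : ℝ := y - t (jdx y)

lemma T_mem_B {x : ℝ} {k : ℕ} (hx : x ∈ A k) : T x = x + t k ∧ T x ∈ B k := by
  have := idx_eq hx
  constructor
  · rw [T, this]
  · rw [T, this]; exact mem_A_iff.mp hx

lemma T_mem_Ioo {x : ℝ} (h0 : 0 ≤ x) (h1 : x < 1) : T x ∈ Ioo (0:ℝ) 1 :=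
  B_subset _ (T_mem_B (mem_A_idx h0 h1)).2

lemma Tinv_T {x : ℝ} (h0 : 0 ≤ x) (h1 : x < 1) : Tinv (T x) = x := by
  obtain ⟨he, hm⟩ := T_mem_B (mem_A_idx h0 h1)
  rw [Tinv, jdx_eq hm, he]; ring

lemma T_Tinv {y : ℝ} (h0 : 0 < y) (h1 : y < 1) : T (Tinv y) = y := by
  have hm := mem_B_jdx h0 h1
  have hA : y - t (jdx y) ∈ A (jdx y) := by
    rw [mem_A_iff]; simpa using hm
  obtain ⟨he, _⟩ := T_mem_B hA
  rw [Tinv, he]; ring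

lemma Tinv_mem_A {y : ℝ} (h0 : 0 < y) (h1 : y < 1) : Tinv y ∈ A (jdx y) := by
  have hm := mem_B_jdx h0 h1
  rw [Tinv, mem_A_iff]; simpa using hm


/-! ### Fixing up the odometer into a bijection of `[0,1]` -/

/-- the forward orbit of `0` -/
def s (n : ℕ) : ℝ := T^[n] 0

/-- exceptional countable set -/
def Cset : Set ℝ := insert 1 (Set.range s)

lemma Cset_countable : Cset.Countable := (Set.countable_range s).insert 1

lemma s_mem (n : ℕ) : s n ∈ Ico (0:ℝ) 1 := by
  induction n with
  | zero => exact ⟨le_refl 0, one_pos⟩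
  | succ n ih =>
      have : s (n+1) = T (s n) := by
        rw [s, s, Function.iterate_succ_apply']
      rw [this]
      have := T_mem_Ioo ih.1 ih.2
      exact ⟨this.1.le, this.2⟩

lemma zero_mem_Cset : (0:ℝ) ∈ Cset := Or.inr ⟨0, rfl⟩

/-- the set on which we use the odometer -/
def D : Set ℝ := Ico 0 1 \ Cset

lemma D_subset_Ioo : D ⊆ Ioo (0:ℝ) 1 := by
  rintro x ⟨⟨h0, h1⟩, hC⟩
  refine ⟨lt_of_le_of_ne h0 ?_, h1⟩
  intro h; exact hC (h ▸ zero_mem_Cset)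

lemma T_mem_D {x : ℝ} (hx : x ∈ D) : T x ∈ D := by
  have hxI : x ∈ Ico (0:ℝ) 1 := hx.1
  have hT := T_mem_Ioo hxI.1 hxI.2
  refine ⟨⟨hT.1.le, hT.2⟩, ?_⟩
  rintro (h1 | ⟨m, hm⟩)
  · exact absurd h1 (ne_of_lt hT.2)
  · cases m with
    | zero => exact absurd hm.symm (ne_of_gt hT.1)
    | succ m =>
        have hsm := s_mem m
        have hTm : T (s m) = T x := by
          rw [← hm, s, s, Function.iterate_succ_apply']
        have : s m = x := by
          have h1 := Tinv_T hsm.1 hsm.2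
          have h2 := Tinv_T hxI.1 hxI.2
          rw [← h1, hTm, h2]
        exact hx.2 (Or.inr ⟨m, this⟩)

lemma Tinv_mem_D {y : ℝ} (hy : y ∈ D) : Tinv y ∈ D := by
  have hyI : y ∈ Ioo (0:ℝ) 1 := D_subset_Ioo hy
  have hA := Tinv_mem_A hyI.1 hyI.2
  have hI : Tinv y ∈ Ico (0:ℝ) 1 := A_subset _ hA
  refine ⟨hI, ?_⟩
  rintro (h1 | ⟨m, hm⟩)
  · exact absurd h1 (ne_of_lt hI.2)
  · have : y = s (m+1) := by
      rw [s, Function.iterate_succ_apply', ← s, hm, T_Tinv hyI.1 hyI.2]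
    exact hy.2 (Or.inr ⟨m+1, this.symm⟩)

/-- the final transformation on `ℝ` : the odometer on `D`, identity elsewhere -/
def g (x : ℝ) : ℝ := if x ∈ D then T x else x

def ginv (y : ℝ) : ℝ := if y ∈ D then Tinv y else y

lemma g_of_mem {x : ℝ} (hx : x ∈ D) : g x = T x := if_pos hx
lemma g_of_not_mem {x : ℝ} (hx : x ∉ D) : g x = x := if_neg hx
lemma ginv_of_mem {y : ℝ} (hy : y ∈ D) : ginv y = Tinv y := if_pos hy
lemma ginv_of_not_mem {y : ℝ} (hy : y ∉ D) : ginv y = y := if_neg hy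

lemma g_mem_D {x : ℝ} (hx : x ∈ D) : g x ∈ D := by rw [g_of_mem hx]; exact T_mem_D hx

lemma ginv_mem_D {y : ℝ} (hy : y ∈ D) : ginv y ∈ D := by
  rw [ginv_of_mem hy]; exact Tinv_mem_D hy

lemma g_ginv_leftInverse : Function.LeftInverse ginv g := by
  intro x
  by_cases hx : x ∈ D
  · rw [g_of_mem hx, ginv_of_mem (T_mem_D hx)]
    exact Tinv_T hx.1.1 hx.1.2
  · rw [g_of_not_mem hx, ginv_of_not_mem hx]

lemma g_ginv_rightInverse : Function.RightInverse ginv g := by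
  intro y
  by_cases hy : y ∈ D
  · rw [ginv_of_mem hy, g_of_mem (by rw [← ginv_of_mem hy]; exact ginv_mem_D hy)]
    have := D_subset_Ioo hy
    exact T_Tinv this.1 this.2
  · rw [ginv_of_not_mem hy, g_of_not_mem hy]

lemma measurableSet_D : MeasurableSet D :=
  measurableSet_Ico.diff (Cset_countable.measurableSet)

lemma g_preimage (S : Set ℝ) :
    g ⁻¹' S = (S \ D) ∪ ⋃ k, ((A k \ Cset) ∩ (fun x => x + t k) ⁻¹' S) := by
  have hAD : ∀ k, A k \ Cset = A k ∩ D := by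
    intro k
    ext x
    simp only [mem_diff, mem_inter_iff, D]
    exact ⟨fun ⟨h1, h2⟩ => ⟨h1, A_subset k h1, h2⟩, fun ⟨h1, _, h2⟩ => ⟨h1, h2⟩⟩
  ext x
  simp only [mem_preimage, mem_union, mem_iUnion, mem_inter_iff, hAD]
  constructor
  · intro hS
    by_cases hx : x ∈ D
    · right
      refine ⟨idx x, ⟨mem_A_idx hx.1.1 hx.1.2, hx⟩, ?_⟩
      rwa [g_of_mem hx, T] at hS
    · left; rw [g_of_not_mem hx] at hS; exact ⟨hS, hx⟩
  · rintro (⟨hS, hx⟩ | ⟨k, ⟨hA, hD⟩, hS⟩)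
    · rwa [g_of_not_mem hx]
    · rw [g_of_mem hD, T, idx_eq hA]; exact hS

lemma ginv_preimage (S : Set ℝ) :
    ginv ⁻¹' S = (S \ D) ∪ ⋃ k, ((B k ∩ D) ∩ (fun y => y - t k) ⁻¹' S) := by
  ext y
  simp only [mem_preimage, mem_union, mem_iUnion, mem_inter_iff]
  constructor
  · intro hS
    by_cases hy : y ∈ D
    · right
      have hyI := D_subset_Ioo hy
      refine ⟨jdx y, ⟨mem_B_jdx hyI.1 hyI.2, hy⟩, ?_⟩
      rwa [ginv_of_mem hy, Tinv] at hS
    · left; rw [ginv_of_not_mem hy] at hS; exact ⟨hS, hy⟩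
  · rintro (⟨hS, hy⟩ | ⟨k, ⟨hB, hD⟩, hS⟩)
    · rwa [ginv_of_not_mem hy]
    · rw [ginv_of_mem hD, Tinv, jdx_eq hB]; exact hS

lemma measurable_g : Measurable g := by
  intro S hS
  rw [g_preimage]
  refine ((hS.diff measurableSet_D).union (MeasurableSet.iUnion fun k => ?_))
  exact ((measurableSet_Ico.diff Cset_countable.measurableSet).inter
    (hS.preimage (measurable_add_const _)))

lemma measurable_ginv : Measurable ginv := by
  intro S hS
  rw [ginv_preimage]
  refine ((hS.diff measurableSet_D).union (MeasurableSet.iUnion fun k => ?_))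
  exact ((measurableSet_Ico.inter measurableSet_D).inter
    (hS.preimage (measurable_sub_const _)))

lemma measurePreserving_g : MeasurePreserving g volume volume := by
  refine ⟨measurable_g, ?_⟩
  ext S hS
  rw [Measure.map_apply measurable_g hS, g_preimage]
  have hCnull : volume Cset = 0 := Cset_countable.measure_zero _
  -- measure of the union part
  have hpiece : ∀ k, volume ((A k \ Cset) ∩ (fun x => x + t k) ⁻¹' S)
      = volume (B k ∩ S) := by
    intro k
    have h1 : volume ((A k \ Cset) ∩ (fun x => x + t k) ⁻¹' S)
        = volume (A k ∩ (fun x => x + t k) ⁻¹' S) := by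
      rw [show (A k \ Cset) ∩ (fun x => x + t k) ⁻¹' S
          = (A k ∩ (fun x => x + t k) ⁻¹' S) \ Cset by
        ext x; simp only [mem_diff, mem_inter_iff]; tauto]
      exact measure_diff_null hCnull
    have h2 : A k ∩ (fun x => x + t k) ⁻¹' S = (fun x => x + t k) ⁻¹' (B k ∩ S) := by
      ext x
      simp only [mem_inter_iff, mem_preimage]
      exact and_congr_left' mem_A_iff
    rw [h1, h2, measure_preimage_add_right]
  have hdisjU : Pairwise (Function.onFun Disjoint
      fun k => (A k \ Cset) ∩ (fun x => x + t k) ⁻¹' S) := by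
    intro k l hkl
    exact (A_disjoint hkl).mono (inter_subset_left.trans diff_subset)
      (inter_subset_left.trans diff_subset)
  have hmeasU : ∀ k, MeasurableSet ((A k \ Cset) ∩ (fun x => x + t k) ⁻¹' S) := fun k =>
    (measurableSet_Ico.diff Cset_countable.measurableSet).inter
      (hS.preimage (measurable_add_const _))
  have hsubD : ∀ k, (A k \ Cset) ∩ (fun x => x + t k) ⁻¹' S ⊆ D := fun k x hx =>
    ⟨A_subset k hx.1.1, hx.1.2⟩
  have hdisj : Disjoint (S \ D) (⋃ k, (A k \ Cset) ∩ (fun x => x + t k) ⁻¹' S) := by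
    rw [Set.disjoint_left]
    rintro x ⟨_, hxD⟩ hx
    obtain ⟨k, hk⟩ := mem_iUnion.mp hx
    exact hxD (hsubD k hk)
  rw [measure_union hdisj (MeasurableSet.iUnion hmeasU), measure_iUnion hdisjU hmeasU]
  have h1 : volume (S \ D) = volume (S \ Ico 0 1) := by
    apply le_antisymm
    · have hsub : S \ D ⊆ (S \ Ico 0 1) ∪ Cset := by
        rintro x ⟨hxS, hxD⟩
        by_cases hx : x ∈ Ico (0:ℝ) 1
        · right
          by_contra hC
          exact hxD ⟨hx, hC⟩
        · exact Or.inl ⟨hxS, hx⟩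
      calc volume (S \ D) ≤ volume ((S \ Ico 0 1) ∪ Cset) := measure_mono hsub
        _ ≤ volume (S \ Ico 0 1) + volume Cset := measure_union_le _ _
        _ = volume (S \ Ico 0 1) := by rw [hCnull, add_zero]
    · exact measure_mono (fun x hx => ⟨hx.1, fun hD => hx.2 hD.1⟩)
  have h2 : ∑' k, volume ((A k \ Cset) ∩ (fun x => x + t k) ⁻¹' S)
      = volume (S ∩ Ioo 0 1) := by
    have := fun k => hpiece k
    rw [tsum_congr hpiece]
    rw [← measure_iUnion (fun k l hkl => (B_disjoint hkl).mono inter_subset_left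
        inter_subset_left) (fun k => measurableSet_Ico.inter hS)]
    congr 1
    ext y
    simp only [mem_iUnion, mem_inter_iff]
    constructor
    · rintro ⟨k, hB, hyS⟩
      exact ⟨hyS, B_subset k hB⟩
    · rintro ⟨hyS, hy⟩
      exact ⟨jdx y, mem_B_jdx hy.1 hy.2, hyS⟩
  rw [h1, h2]
  have h3 : volume (S ∩ Ioo 0 1) = volume (S ∩ Ico 0 1) := by
    apply le_antisymm
    · exact measure_mono (inter_subset_inter_right _ Ioo_subset_Ico_self)
    · have hsub : S ∩ Ico 0 1 ⊆ (S ∩ Ioo 0 1) ∪ {0} := by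
        rintro x ⟨hxS, h0, h1⟩
        rcases eq_or_lt_of_le h0 with he | hlt
        · exact Or.inr (by simp [← he])
        · exact Or.inl ⟨hxS, hlt, h1⟩
      calc volume (S ∩ Ico 0 1) ≤ volume ((S ∩ Ioo 0 1) ∪ {0}) := measure_mono hsub
        _ ≤ volume (S ∩ Ioo 0 1) + volume {0} := measure_union_le _ _
        _ = volume (S ∩ Ioo 0 1) := by rw [Real.volume_singleton, add_zero]
  rw [add_comm, h3, measure_inter_add_diff S measurableSet_Ico]


/-! ### Restriction to the unit interval -/

lemma g_mem_I {x : ℝ} (hx : x ∈ I) : g x ∈ I := by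
  by_cases hD : x ∈ D
  · rw [g_of_mem hD]
    have := T_mem_Ioo hD.1.1 hD.1.2
    exact ⟨this.1.le, this.2.le⟩
  · rwa [g_of_not_mem hD]

lemma ginv_mem_I {y : ℝ} (hy : y ∈ I) : ginv y ∈ I := by
  by_cases hD : y ∈ D
  · rw [ginv_of_mem hD]
    have := A_subset _ (Tinv_mem_A (D_subset_Ioo hD).1 (D_subset_Ioo hD).2)
    exact ⟨this.1, this.2.le⟩
  · rwa [ginv_of_not_mem hD]

lemma g_mem_I_rev {x : ℝ} (hx : g x ∈ I) : x ∈ I := by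
  by_cases hD : x ∈ D
  · exact ⟨hD.1.1, hD.1.2.le⟩
  · rwa [g_of_not_mem hD] at hx

/-- the odometer as a measurable equivalence of the unit interval -/
def rho : I ≃ᵐ I where
  toFun := fun x => ⟨g x, g_mem_I x.2⟩
  invFun := fun y => ⟨ginv y, ginv_mem_I y.2⟩
  left_inv := fun x => Subtype.ext (g_ginv_leftInverse x)
  right_inv := fun y => Subtype.ext (g_ginv_rightInverse y)
  measurable_toFun := (measurable_g.comp measurable_subtype_coe).subtype_mk
  measurable_invFun := (measurable_ginv.comp measurable_subtype_coe).subtype_mk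

lemma coe_rho (x : I) : (rho x : ℝ) = g x := rfl

lemma measurableEmbedding_coe : MeasurableEmbedding ((↑) : I → ℝ) :=
  MeasurableEmbedding.subtype_coe measurableSet_Icc

lemma volume_eq_image (E : Set I) : volume E = volume (((↑) : I → ℝ) '' E) := by
  rw [unitInterval.volume_def]
  exact measurableEmbedding_coe.comap_apply volume E

lemma measurePreserving_rho : MeasurePreserving rho volume volume := by
  refine ⟨rho.measurable, ?_⟩
  ext E hE
  rw [Measure.map_apply rho.measurable hE]
  rw [volume_eq_image (rho ⁻¹' E), volume_eq_image E]
  have him : ((↑) : I → ℝ) '' (rho ⁻¹' E) = g ⁻¹' (((↑) : I → ℝ) '' E) := by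
    ext y
    simp only [mem_image, mem_preimage]
    constructor
    · rintro ⟨x, hx, rfl⟩
      exact ⟨rho x, hx, (coe_rho x).symm⟩
    · rintro ⟨x, hxE, hgx⟩
      have hyI : y ∈ I := g_mem_I_rev (hgx ▸ x.2)
      refine ⟨⟨y, hyI⟩, ?_, rfl⟩
      have : rho ⟨y, hyI⟩ = x := Subtype.ext (by rw [coe_rho, hgx])
      rwa [this]
  rw [him, measurePreserving_g.measure_preimage
    (measurableEmbedding_coe.measurableSet_image.mpr hE).nullMeasurableSet]


/-! ### Digits and the cyclic eigenfunctions -/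

/-- the `j`-th mixed-radix digit of `x` -/
def dig (j : ℕ) (x : ℝ) : ℤ := ⌊(Pn (j + 1) : ℝ) * x⌋ % ((j : ℤ) + 2)

/-- value of the first `m` digits, read little-endian -/
def f (m : ℕ) (x : ℝ) : ℤ := ∑ j ∈ Finset.range m, dig j x * (Pn j : ℤ)

lemma emod_helper {b r m : ℤ} (hm : m ∣ b) : (b + r) % m = r % m := by
  obtain ⟨c, rfl⟩ := hm
  rw [add_comm, mul_comm]
  exact Int.add_mul_emod_self_right _ _ _

lemma dvd_cast_Pn (j : ℕ) : ((j : ℤ) + 2) ∣ (Pn (j + 1) : ℤ) := by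
  have : (j + 2) ∣ Pn (j + 1) := Nat.dvd_factorial (by omega) (by omega)
  exact_mod_cast Int.natCast_dvd_natCast.mpr this

lemma measurable_f (m : ℕ) : Measurable (f m) := by
  apply Finset.measurable_sum
  intro j _
  have h1 : Measurable fun x : ℝ => ⌊(Pn (j + 1) : ℝ) * x⌋ :=
    Int.measurable_floor.comp (measurable_id.const_mul _)
  have h2 : Measurable fun z : ℤ => z % ((j:ℤ) + 2) * (Pn j : ℤ) := measurable_from_top
  exact h2.comp h1

lemma dig_small {x : ℝ} {k j : ℕ} (hx : x ∈ A k) (hj : j < k) :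
    dig j x = (j : ℤ) + 1 ∧ dig j (x + t k) = 0 := by
  obtain ⟨hx1, hx2⟩ := hx
  have hxlt1 : x < 1 := lt_of_lt_of_le hx2 (a_lt_one (k+1)).le
  have hq : (0:ℝ) < (Pn (j+1) : ℝ) := Pn_cast_pos _
  have hPk : (Pn (j+1) : ℝ) ≤ (Pn k : ℝ) := by exact_mod_cast Pn_mono (by omega : j + 1 ≤ k)
  have hk0 : (0:ℝ) < (Pn k : ℝ) := Pn_cast_pos _
  constructor
  · have hfloor : ⌊(Pn (j + 1) : ℝ) * x⌋ = (Pn (j + 1) : ℤ) - 1 := by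
      rw [Int.floor_eq_iff]
      constructor
      · push_cast
        have h1 : (1:ℝ) - 1 / Pn k ≤ x := by simpa [a] using hx1
        have h2 : (Pn (j+1) : ℝ) / Pn k ≤ 1 := by
          rw [div_le_one hk0]; exact hPk
        have := mul_le_mul_of_nonneg_left h1 hq.le
        rw [mul_sub] at this
        have h3 : (Pn (j+1) : ℝ) * (1 / Pn k) = (Pn (j+1) : ℝ) / Pn k := by ring
        nlinarith
      · push_cast
        nlinarith
    rw [dig, hfloor]
    have : (Pn (j + 1) : ℤ) - 1 = ((Pn (j + 1) : ℤ) - ((j:ℤ) + 2)) + ((j:ℤ) + 1) := by ring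
    rw [this, emod_helper (dvd_sub (dvd_cast_Pn j) dvd_rfl)]
    exact Int.emod_eq_of_lt (by omega) (by omega)
  · have hmemB : x + t k ∈ B k := mem_A_iff.mp ⟨hx1, hx2⟩
    have h0 : 0 < x + t k := (B_subset k hmemB).1
    have h1 : x + t k < 1 / (Pn (j+1) : ℝ) := by
      refine lt_of_lt_of_le hmemB.2 ?_
      exact one_div_le_one_div_of_le hq hPk
    have hfloor : ⌊(Pn (j + 1) : ℝ) * (x + t k)⌋ = 0 := by
      rw [Int.floor_eq_iff]
      constructor
      · push_cast; positivity
      · push_cast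
        rw [lt_div_iff₀ hq] at h1
        nlinarith
    rw [dig, hfloor, Int.zero_emod]

lemma dig_at {x : ℝ} {k : ℕ} (hx : x ∈ A k) :
    ∃ r : ℤ, 0 ≤ r ∧ r ≤ k ∧ dig k x = r ∧ dig k (x + t k) = r + 1 := by
  obtain ⟨hx1, hx2⟩ := hx
  have hq : (0:ℝ) < (Pn (k+1) : ℝ) := Pn_cast_pos _
  have hk0 : (0:ℝ) < (Pn k : ℝ) := Pn_cast_pos _
  have hsucc : (Pn (k+1) : ℝ) = ((k:ℝ) + 2) * (Pn k : ℝ) := by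
    have := Pn_succ k; push_cast [this]; ring
  set F := ⌊(Pn (k + 1) : ℝ) * x⌋ with hF
  have hlow : (Pn (k+1) : ℤ) - ((k:ℤ) + 2) ≤ F := by
    apply Int.le_floor.mpr
    push_cast
    have h1 : (1:ℝ) - 1 / Pn k ≤ x := by simpa [a] using hx1
    have h2 : (Pn (k+1) : ℝ) * (1 / Pn k) = (k:ℝ) + 2 := by
      rw [hsucc]; field_simp
    nlinarith
  have hhigh : F ≤ (Pn (k+1) : ℤ) - 2 := by
    have : F < (Pn (k+1) : ℤ) - 1 := by
      apply Int.floor_lt.mpr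
      push_cast
      have h1 : x < 1 - 1 / Pn (k+1) := by simpa [a] using hx2
      have h2 : (Pn (k+1) : ℝ) * (1 / Pn (k+1)) = 1 := by field_simp
      nlinarith
    omega
  refine ⟨F - ((Pn (k+1) : ℤ) - ((k:ℤ) + 2)), by omega, by omega, ?_, ?_⟩
  · have h := emod_helper (b := (Pn (k+1) : ℤ) - ((k:ℤ) + 2))
      (r := F - ((Pn (k+1) : ℤ) - ((k:ℤ) + 2))) (m := (k:ℤ) + 2)
      (dvd_sub (dvd_cast_Pn k) dvd_rfl)
    have h2 : (Pn (k+1) : ℤ) - ((k:ℤ) + 2) + (F - ((Pn (k+1) : ℤ) - ((k:ℤ) + 2))) = F := by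
      ring
    rw [h2] at h
    rw [dig, ← hF, h]
    exact Int.emod_eq_of_lt (by omega) (by omega)
  · have hz : (Pn (k + 1) : ℝ) * (x + t k) = (Pn (k+1) : ℝ) * x
        + (((k:ℤ) + 3 - (Pn (k+1) : ℤ) : ℤ) : ℝ) := by
      rw [t, mul_add]
      congr 1
      push_cast
      rw [hsucc]
      field_simp
      ring
    rw [dig, hz, Int.floor_add_intCast, ← hF]
    have he : F + ((k:ℤ) + 3 - (Pn (k+1) : ℤ)) =
        ((Pn (k+1) : ℤ) - ((k:ℤ) + 2)) + (F - ((Pn (k+1) : ℤ) - ((k:ℤ) + 2))) + ((k:ℤ) + 3 - (Pn (k+1) : ℤ)) := by ring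
    rw [he]
    have : ((Pn (k+1) : ℤ) - ((k:ℤ) + 2)) + (F - ((Pn (k+1) : ℤ) - ((k:ℤ) + 2))) + ((k:ℤ) + 3 - (Pn (k+1) : ℤ))
        = (F - ((Pn (k+1) : ℤ) - ((k:ℤ) + 2))) + 1 := by ring
    rw [this]
    exact Int.emod_eq_of_lt (by omega) (by omega)

lemma dig_large {x : ℝ} {k j : ℕ} (hj : k < j) : dig j (x + t k) = dig j x := by
  obtain ⟨u, hu⟩ := Pn_dvd (show k ≤ j by omega)
  obtain ⟨v, hv⟩ := Pn_dvd (show k + 1 ≤ j by omega)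
  have hk0 : (0:ℝ) < (Pn k : ℝ) := Pn_cast_pos _
  have hk10 : (0:ℝ) < (Pn (k+1) : ℝ) := Pn_cast_pos _
  have hz : (Pn (j + 1) : ℝ) * (x + t k) = (Pn (j+1) : ℝ) * x
      + ((((j:ℤ)+2) * ((u:ℤ) + (v:ℤ)) - (Pn (j+1) : ℤ) : ℤ) : ℝ) := by
    rw [t, mul_add]
    congr 1
    have h1 : (Pn (j+1) : ℝ) = ((j:ℝ)+2) * ((Pn k : ℝ) * u) := by
      have := Pn_succ j
      push_cast [this, hu]; ring
    have h2 : (Pn (j+1) : ℝ) = ((j:ℝ)+2) * ((Pn (k+1) : ℝ) * v) := by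
      have := Pn_succ j
      push_cast [this, hv]; ring
    push_cast
    rw [mul_sub, mul_add, mul_one]
    rw [show (Pn (j+1) : ℝ) * (1 / Pn k) = ((j:ℝ)+2) * u by rw [h1]; field_simp]
    rw [show (Pn (j+1) : ℝ) * (1 / Pn (k+1)) = ((j:ℝ)+2) * v by rw [h2]; field_simp]
    ring
  rw [dig, dig, hz, Int.floor_add_intCast]
  obtain ⟨c, hc⟩ : ((j:ℤ) + 2) ∣ (((j:ℤ)+2) * ((u:ℤ) + (v:ℤ)) - (Pn (j+1) : ℤ)) :=
    dvd_sub (Dvd.intro _ rfl) (dvd_cast_Pn j)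
  rw [hc, mul_comm, Int.add_mul_emod_self_left]

lemma sum_id (m : ℕ) : ∑ j ∈ Finset.range m, ((j:ℤ) + 1) * (Pn j : ℤ) = (Pn m : ℤ) - 1 := by
  induction m with
  | zero => simp [Pn_zero]
  | succ m ih =>
      rw [Finset.sum_range_succ, ih]
      have := Pn_succ m
      push_cast [this]
      ring

lemma f_top {x : ℝ} {m k : ℕ} (hx : x ∈ A k) (hmk : m ≤ k) :
    f m x = (Pn m : ℤ) - 1 ∧ f m (x + t k) = 0 := by
  constructor
  · rw [f, ← sum_id m]
    apply Finset.sum_congr rfl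
    intro j hj
    rw [(dig_small hx (lt_of_lt_of_le (Finset.mem_range.mp hj) hmk)).1]
  · rw [f]
    apply Finset.sum_eq_zero
    intro j hj
    rw [(dig_small hx (lt_of_lt_of_le (Finset.mem_range.mp hj) hmk)).2, zero_mul]

lemma f_succ_eq {x : ℝ} {m k : ℕ} (hx : x ∈ A k) (hkm : k < m) :
    f m (x + t k) = f m x + 1 := by
  obtain ⟨r, hr0, hrk, hdx, hdTx⟩ := dig_at hx
  have hsplit : ∀ y : ℝ, f m y = (∑ j ∈ Finset.range k, dig j y * (Pn j : ℤ))
      + dig k y * (Pn k : ℤ) + ∑ j ∈ Finset.Ico (k+1) m, dig j y * (Pn j : ℤ) := by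
    intro y
    rw [f, Finset.range_eq_Ico,
      ← Finset.sum_Ico_consecutive _ (Nat.zero_le (k+1)) (by omega : k + 1 ≤ m),
      ← Finset.range_eq_Ico, Finset.sum_range_succ]
  rw [hsplit, hsplit]
  have h1 : ∑ j ∈ Finset.range k, dig j (x + t k) * (Pn j : ℤ) = 0 :=
    Finset.sum_eq_zero fun j hj => by
      rw [(dig_small hx (Finset.mem_range.mp hj)).2, zero_mul]
  have h2 : ∑ j ∈ Finset.range k, dig j x * (Pn j : ℤ)
      = ∑ j ∈ Finset.range k, ((j:ℤ) + 1) * (Pn j : ℤ) :=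
    Finset.sum_congr rfl fun j hj => by
      rw [(dig_small hx (Finset.mem_range.mp hj)).1]
  have h3 : ∑ j ∈ Finset.Ico (k+1) m, dig j (x + t k) * (Pn j : ℤ)
      = ∑ j ∈ Finset.Ico (k+1) m, dig j x * (Pn j : ℤ) :=
    Finset.sum_congr rfl fun j hj => by
      rw [dig_large (show k < j from (Finset.mem_Ico.mp hj).1)]
  rw [h1, h2, h3, sum_id, hdx, hdTx]
  ring

lemma f_g_step {m : ℕ} {x : ℝ} (hx : x ∈ D) :
    f m (g x) ≡ f m x + 1 [ZMOD (Pn m : ℤ)] := by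
  have hA : x ∈ A (idx x) := mem_A_idx hx.1.1 hx.1.2
  rw [g_of_mem hx, T]
  rcases lt_or_ge (idx x) m with h | h
  · rw [f_succ_eq hA h]
  · obtain ⟨h1, h2⟩ := f_top hA h
    rw [h1, h2]
    have : ((Pn m : ℤ) - 1) + 1 = (Pn m : ℤ) := by ring
    rw [this]
    exact (Int.modEq_zero_iff_dvd.mpr dvd_rfl).symm

lemma f_g_iterate {m : ℕ} {x : ℝ} (hx : x ∈ D) (i : ℕ) :
    g^[i] x ∈ D ∧ f m (g^[i] x) ≡ f m x + i [ZMOD (Pn m : ℤ)] := by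
  induction i with
  | zero =>
      simp only [Function.iterate_zero_apply, Nat.cast_zero, add_zero]
      exact ⟨hx, Int.ModEq.refl _⟩
  | succ i ih =>
      rw [Function.iterate_succ_apply']
      refine ⟨g_mem_D ih.1, ?_⟩
      have := (f_g_step (m := m) ih.1).trans (ih.2.add_right 1)
      push_cast
      push_cast at this
      calc f m (g (g^[i] x)) ≡ f m x + i + 1 [ZMOD (Pn m : ℤ)] := this
        _ = f m x + (i + 1) := by ring

lemma f_ginv_iterate {m : ℕ} {y : ℝ} (hy : y ∈ D) (i : ℕ) :
    ginv^[i] y ∈ D ∧ f m (ginv^[i] y) + i ≡ f m y [ZMOD (Pn m : ℤ)] := by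
  induction i with
  | zero =>
      simp only [Function.iterate_zero_apply, Nat.cast_zero, add_zero]
      exact ⟨hy, Int.ModEq.refl _⟩
  | succ i ih =>
      rw [Function.iterate_succ_apply']
      have hD : ginv (ginv^[i] y) ∈ D := ginv_mem_D ih.1
      refine ⟨hD, ?_⟩
      have hgg : g (ginv (ginv^[i] y)) = ginv^[i] y := g_ginv_rightInverse _
      have hstep := f_g_step (m := m) hD
      rw [hgg] at hstep
      have := (hstep.symm.add_right i).trans ih.2
      push_cast
      push_cast at this
      calc f m (ginv (ginv^[i] y)) + (i + 1)
          = f m (ginv (ginv^[i] y)) + 1 + i := by ring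
        _ ≡ f m y [ZMOD (Pn m : ℤ)] := this


/-! ### The partition sets -/

lemma coe_rho_symm (y : I) : (rho.symm y : ℝ) = ginv y := rfl

lemma coe_rho_iterate (i : ℕ) (x : I) : (((⇑rho)^[i] x : I) : ℝ) = g^[i] (x : ℝ) := by
  induction i with
  | zero => rfl
  | succ i ih =>
      rw [Function.iterate_succ_apply', Function.iterate_succ_apply', coe_rho, ih]

lemma coe_rho_symm_iterate (i : ℕ) (y : I) :
    (((⇑rho.symm)^[i] y : I) : ℝ) = ginv^[i] (y : ℝ) := by
  induction i with
  | zero => rfl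
  | succ i ih =>
      rw [Function.iterate_succ_apply', Function.iterate_succ_apply', coe_rho_symm, ih]

/-- the level sets of the eigenfunction -/
def cset (n : ℕ) (i : ℤ) : Set I := {x : I | (x:ℝ) ∈ D ∧ f n (x:ℝ) ≡ i [ZMOD (n:ℤ)]}

lemma measurableSet_cset (n : ℕ) (i : ℤ) : MeasurableSet (cset n i) := by
  have h : cset n i = ((↑) : I → ℝ) ⁻¹' (D ∩ (f n) ⁻¹' {z : ℤ | z ≡ i [ZMOD (n:ℤ)]}) := rfl
  rw [h]
  exact (measurableSet_D.inter ((measurable_f n) trivial)).preimage measurable_subtype_coe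

lemma dvd_Pn_self (n : ℕ) (hn : 1 ≤ n) : (n : ℤ) ∣ (Pn n : ℤ) :=
  Int.natCast_dvd_natCast.mpr (Nat.dvd_factorial (by omega) (by omega))

lemma rho_image (n : ℕ) (hn : 1 ≤ n) (i : ℕ) :
    (⇑rho)^[i] '' cset n 0 = cset n i := by
  have hdvd := dvd_Pn_self n hn
  ext y
  constructor
  · rintro ⟨x, ⟨hxD, hx0⟩, rfl⟩
    have h := f_g_iterate (m := n) hxD i
    constructor
    · rw [coe_rho_iterate]; exact h.1
    · rw [coe_rho_iterate]
      have h1 : f n (g^[i] (x:ℝ)) ≡ f n (x:ℝ) + i [ZMOD (n:ℤ)] := h.2.of_dvd hdvd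
      have h2 : f n (x:ℝ) + (i:ℤ) ≡ 0 + (i:ℤ) [ZMOD (n:ℤ)] := hx0.add_right _
      simpa using h1.trans h2
  · rintro ⟨hyD, hyi⟩
    refine ⟨(⇑rho.symm)^[i] y, ?_, ?_⟩
    · have h := f_ginv_iterate (m := n) hyD i
      constructor
      · rw [coe_rho_symm_iterate]; exact h.1
      · rw [coe_rho_symm_iterate]
        have h1 : f n (ginv^[i] (y:ℝ)) + i ≡ f n (y:ℝ) [ZMOD (n:ℤ)] := h.2.of_dvd hdvd
        have h2 : f n (ginv^[i] (y:ℝ)) + (i:ℤ) ≡ 0 + (i:ℤ) [ZMOD (n:ℤ)] := by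
          simpa using h1.trans hyi
        exact h2.add_right_cancel' _
    · exact (Function.LeftInverse.iterate (fun z => rho.apply_symm_apply z) i) y

lemma volume_Dlift : volume {x : I | (x:ℝ) ∈ D} = 1 := by
  have hcompl : volume {x : I | (x:ℝ) ∉ D} = 0 := by
    have hsub : {x : I | (x:ℝ) ∉ D} ⊆ ((↑) : I → ℝ) ⁻¹' Cset := by
      intro x hx
      by_cases h1 : (x:ℝ) ∈ Ico (0:ℝ) 1
      · by_contra hC
        exact hx ⟨h1, hC⟩
      · have : (x:ℝ) = 1 := le_antisymm x.2.2 (by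
          rcases not_and_or.mp h1 with h | h
          · exact absurd x.2.1 h
          · exact not_lt.mp h)
        rw [Set.mem_preimage, this]
        exact Or.inl rfl
    refine le_antisymm ?_ (by positivity)
    calc volume {x : I | (x:ℝ) ∉ D} ≤ volume (((↑) : I → ℝ) ⁻¹' Cset) := measure_mono hsub
      _ = volume (((↑) : I → ℝ) '' (((↑) : I → ℝ) ⁻¹' Cset)) := volume_eq_image _
      _ ≤ volume Cset := measure_mono (image_preimage_subset _ _)
      _ = 0 := Cset_countable.measure_zero _
  have huniv : (volume (univ : Set I)) = 1 := measure_univ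
  apply le_antisymm
  · rw [← huniv]; exact measure_mono (subset_univ _)
  · calc (1 : ENNReal) = volume (univ : Set I) := huniv.symm
      _ ≤ volume {x : I | (x:ℝ) ∈ D} + volume {x : I | (x:ℝ) ∉ D} := by
          refine le_trans (measure_mono ?_) (measure_union_le _ _)
          intro x _
          by_cases h : (x:ℝ) ∈ D
          · exact Or.inl h
          · exact Or.inr h
      _ = volume {x : I | (x:ℝ) ∈ D} := by rw [hcompl, add_zero]

lemma main (n : ℕ) (hn : 1 ≤ n) :
    ∃ c : Set I, MeasurableSet c ∧
      (∀ i < n, ∀ j < n, i ≠ j → volume ((⇑rho)^[i] '' c ∩ (⇑rho)^[j] '' c) = 0) ∧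
      volume (⋃ i < n, (⇑rho)^[i] '' c) = 1 := by
  have hn0 : (0:ℤ) < (n:ℤ) := by exact_mod_cast hn
  refine ⟨cset n 0, measurableSet_cset n 0, ?_, ?_⟩
  · intro i hi j hj hij
    rw [rho_image n hn i, rho_image n hn j]
    have hempty : cset n i ∩ cset n j = ∅ := by
      ext x
      simp only [mem_inter_iff, mem_empty_iff_false, iff_false, not_and]
      rintro ⟨hD, hxi⟩ ⟨_, hxj⟩
      have h1 : ((i:ℤ) : ℤ) % n = (j:ℤ) % n := (hxi.symm.trans hxj)
      rw [Int.emod_eq_of_lt (by omega) (by exact_mod_cast hi),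
        Int.emod_eq_of_lt (by omega) (by exact_mod_cast hj)] at h1
      exact hij (by exact_mod_cast h1)
    rw [hempty, measure_empty]
  · have hU : (⋃ i < n, (⇑rho)^[i] '' cset n 0) = {x : I | (x:ℝ) ∈ D} := by
      ext x
      simp only [mem_iUnion, exists_prop]
      constructor
      · rintro ⟨i, hi, hx⟩
        rw [rho_image n hn i] at hx
        exact hx.1
      · intro hxD
        set r := f n (x:ℝ) % (n:ℤ) with hr
        have hr0 : 0 ≤ r := Int.emod_nonneg _ (by omega)
        have hrn : r < n := Int.emod_lt_of_pos _ hn0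
        refine ⟨r.toNat, by omega, ?_⟩
        rw [rho_image n hn r.toNat]
        refine ⟨hxD, ?_⟩
        show f n (x:ℝ) % (n:ℤ) = ((r.toNat : ℤ)) % n
        rw [Int.toNat_of_nonneg hr0, ← hr, Int.emod_emod_of_dvd _ dvd_rfl]
    rw [hU, volume_Dlift]

end

end OdometerConstruction

/-- There exists an invertible measure-preserving transformation `ρ` of `([0,1], λ)` such
that for every `n ≥ 1` there is a measurable set `c ⊆ [0,1]` such that `(c, ρ)` generates an
`n`-partition. -/
theorem exists_transformation_with_all_nPartitions :
    ∃ ρ : I ≃ᵐ I, MeasurePreserving ρ volume volume ∧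
      ∀ n : ℕ, 1 ≤ n → ∃ c : Set I, GeneratesNPartition volume ρ c n := by
  refine ⟨OdometerConstruction.rho, OdometerConstruction.measurePreserving_rho, ?_⟩
  intro n hn
  obtain ⟨c, hc1, hc2, hc3⟩ := OdometerConstruction.main n hn
  exact ⟨c, hc1, hc2, hc3⟩
end

section
/- Let X be a nonempty compact Hausdorff topological space whose topology has a countable base, and let d be a metric on X (not assumed to induce the topology) such that the set {(x, y) ∈ X × X : d(x, y) ≤ 1/3} is closed in the product topology. Assume there is an uncountable subset S ⊆ X with d(p, q) ≥ 1/2 for all distinct p, q ∈ S. Then there exists a family (F_s), indexed by finite binary strings s, of nonempty closed subsets of X such that F_t ⊆ F_s whenever s is an initial segment of t, and for every finite binary string s, d(x, y) > 1/3 whenever x ∈ F_{s⌢0} and y ∈ F_{s⌢1}. -/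
open Set

section Aux

variable {X : Type*} [TopologicalSpace X] [CompactSpace X]
    [T2Space X] [SecondCountableTopology X]

/-- In a second-countable space, an uncountable set contains two distinct condensation
points (points all of whose neighbourhoods meet the set uncountably). -/
lemma exists_two_condensation (T : Set X) (hT : ¬ T.Countable) :
    ∃ p ∈ T, ∃ q ∈ T, p ≠ q ∧
      (∀ U, IsOpen U → p ∈ U → ¬ (T ∩ U).Countable) ∧
      (∀ U, IsOpen U → q ∈ U → ¬ (T ∩ U).Countable) := by
  set C := {x ∈ T | ∀ U, IsOpen U → x ∈ U → ¬ (T ∩ U).Countable} with hC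
  obtain ⟨b, hbc, -, hb⟩ := TopologicalSpace.exists_countable_basis X
  have hTC : (T \ C).Countable := by
    have hsub : T \ C ⊆ ⋃ U ∈ {U ∈ b | (T ∩ U).Countable}, T ∩ U := by
      rintro x ⟨hxT, hxC⟩
      have : ¬ (∀ U, IsOpen U → x ∈ U → ¬ (T ∩ U).Countable) := by
        intro h; exact hxC ⟨hxT, h⟩
      push_neg at this
      obtain ⟨U, hUopen, hxU, hcnt⟩ := this
      obtain ⟨V, hVb, hxV, hVU⟩ := hb.exists_subset_of_mem_open hxU hUopen
      exact mem_biUnion ⟨hVb, hcnt.mono (inter_subset_inter_right _ hVU)⟩ ⟨hxT, hxV⟩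
    exact Countable.mono hsub
      ((hbc.mono (sep_subset _ _)).biUnion (fun U hU => hU.2))
  have hCunc : ¬ C.Countable := by
    intro h
    have hTsub : T ⊆ (T \ C) ∪ C := by
      intro x hx
      by_cases hc : x ∈ C
      · exact Or.inr hc
      · exact Or.inl ⟨hx, hc⟩
    exact hT (Countable.mono hTsub (hTC.union h))
  have hCnontriv : ¬ C.Subsingleton := fun h => hCunc h.countable
  rw [Set.not_subsingleton_iff] at hCnontriv
  obtain ⟨p, hp, q, hq, hpq⟩ := hCnontriv
  exact ⟨p, hp.1, q, hq.1, hpq, hp.2, hq.2⟩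

/-- The invariant carried along the tree: an open set together with an uncountable
subset of `S` contained in it. -/
def TreeInv (S : Set X) (p : Set X × Set X) : Prop :=
  IsOpen p.1 ∧ p.2 ⊆ p.1 ∧ p.2 ⊆ S ∧ ¬ p.2.Countable

lemma step_lemma (d : X → X → ℝ)
    (hd_closed : IsClosed {p : X × X | d p.1 p.2 ≤ 1 / 3})
    (S : Set X)
    (hS_sep : ∀ p ∈ S, ∀ q ∈ S, p ≠ q → 1 / 2 ≤ d p q)
    {p : Set X × Set X} (hp : TreeInv S p) :
    ∃ q : (Set X × Set X) × (Set X × Set X), TreeInv S q.1 ∧ TreeInv S q.2 ∧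
      q.1.1 ⊆ p.1 ∧ q.2.1 ⊆ p.1 ∧
      ∀ x ∈ closure q.1.1, ∀ y ∈ closure q.2.1, 1 / 3 < d x y := by
  obtain ⟨hGopen, hTG, hTS, hTc⟩ := hp
  obtain ⟨a, haT, c, hcT, hac, hacond, hccond⟩ := exists_two_condensation p.2 hTc
  have hdac : (1 : ℝ) / 3 < d a c :=
    lt_of_lt_of_le (by norm_num) (hS_sep a (hTS haT) c (hTS hcT) hac)
  have hopen : IsOpen {x : X × X | 1 / 3 < d x.1 x.2} := by
    have h := hd_closed.isOpen_compl
    convert h using 1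
    ext x; simp [not_le]
  obtain ⟨U, V, hU, hV, haU, hcV, hUV⟩ := isOpen_prod_iff.mp hopen a c hdac
  obtain ⟨tU, htUnhds, htUclosed, htUsub⟩ :=
    exists_mem_nhds_isClosed_subset (hU.mem_nhds haU)
  obtain ⟨tV, htVnhds, htVclosed, htVsub⟩ :=
    exists_mem_nhds_isClosed_subset (hV.mem_nhds hcV)
  set U₀ := interior tU ∩ p.1 with hU₀
  set V₀ := interior tV ∩ p.1 with hV₀
  have haU₀ : a ∈ U₀ := ⟨mem_interior_iff_mem_nhds.2 htUnhds, hTG haT⟩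
  have hcV₀ : c ∈ V₀ := ⟨mem_interior_iff_mem_nhds.2 htVnhds, hTG hcT⟩
  refine ⟨((U₀, p.2 ∩ U₀), (V₀, p.2 ∩ V₀)),
    ⟨isOpen_interior.inter hGopen, inter_subset_right, fun x hx => hTS hx.1,
      hacond U₀ (isOpen_interior.inter hGopen) haU₀⟩,
    ⟨isOpen_interior.inter hGopen, inter_subset_right, fun x hx => hTS hx.1,
      hccond V₀ (isOpen_interior.inter hGopen) hcV₀⟩,
    inter_subset_right, inter_subset_right, ?_⟩
  intro x hx y hy
  have hxU : x ∈ U := htUsub (htUclosed.closure_subset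
    ((closure_mono (inter_subset_left.trans interior_subset)) hx))
  have hyV : y ∈ V := htVsub (htVclosed.closure_subset
    ((closure_mono (inter_subset_left.trans interior_subset)) hy))
  exact hUV (Set.mk_mem_prod hxU hyV)

/-- The recursive tree construction (lists are read with the most recent branch first). -/
noncomputable def tree (d : X → X → ℝ)
    (hd_closed : IsClosed {p : X × X | d p.1 p.2 ≤ 1 / 3})
    (S : Set X)
    (hS_sep : ∀ p ∈ S, ∀ q ∈ S, p ≠ q → 1 / 2 ≤ d p q)
    (hS_unc : ¬ S.Countable) : List Bool → {p : Set X × Set X // TreeInv S p}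
  | [] => ⟨(Set.univ, S), ⟨isOpen_univ, subset_univ S, Subset.rfl, hS_unc⟩⟩
  | (b :: s) =>
      let E := step_lemma d hd_closed S hS_sep (tree d hd_closed S hS_sep hS_unc s).2
      cond b ⟨E.choose.2, E.choose_spec.2.1⟩ ⟨E.choose.1, E.choose_spec.1⟩

variable (d : X → X → ℝ)
    (hd_closed : IsClosed {p : X × X | d p.1 p.2 ≤ 1 / 3})
    (S : Set X)
    (hS_sep : ∀ p ∈ S, ∀ q ∈ S, p ≠ q → 1 / 2 ≤ d p q)
    (hS_unc : ¬ S.Countable)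

lemma tree_cons_subset (b : Bool) (s : List Bool) :
    (tree d hd_closed S hS_sep hS_unc (b :: s)).1.1 ⊆
      (tree d hd_closed S hS_sep hS_unc s).1.1 := by
  cases b <;> simp only [tree, cond_false, cond_true]
  · exact (step_lemma d hd_closed S hS_sep
        (tree d hd_closed S hS_sep hS_unc s).2).choose_spec.2.2.1
  · exact (step_lemma d hd_closed S hS_sep
        (tree d hd_closed S hS_sep hS_unc s).2).choose_spec.2.2.2.1

lemma tree_append_subset (l s : List Bool) :
    (tree d hd_closed S hS_sep hS_unc (l ++ s)).1.1 ⊆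
      (tree d hd_closed S hS_sep hS_unc s).1.1 := by
  induction l with
  | nil => exact Subset.rfl
  | cons b l ih =>
      exact (tree_cons_subset d hd_closed S hS_sep hS_unc b (l ++ s)).trans ih

lemma tree_sep (s : List Bool) :
    ∀ x ∈ closure (tree d hd_closed S hS_sep hS_unc (false :: s)).1.1,
    ∀ y ∈ closure (tree d hd_closed S hS_sep hS_unc (true :: s)).1.1,
      1 / 3 < d x y := by
  simp only [tree, cond_false, cond_true]
  exact (step_lemma d hd_closed S hS_sep
    (tree d hd_closed S hS_sep hS_unc s).2).choose_spec.2.2.2.2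

end Aux

/-- Proposition 3.4 (abstract form): if `X` is a nonempty compact Hausdorff second-countable
topological space, `d` a metric on `X` (not assumed compatible with the topology) such that
`{(x,y) : d x y ≤ 1/3}` is closed and there is an uncountable `1/2`-separated subset, then
there is a binary tree of nonempty closed subsets of `X`, decreasing along the tree, in which
the two successors of any node are at distance `> 1/3` from each other. -/
theorem exists_tree_of_separated_sets {X : Type*} [TopologicalSpace X] [CompactSpace X]
    [T2Space X] [SecondCountableTopology X] [Nonempty X]
    (d : X → X → ℝ)
    (hd_eq : ∀ x y, d x y = 0 ↔ x = y)
    (hd_symm : ∀ x y, d x y = d y x)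
    (hd_triangle : ∀ x y z, d x z ≤ d x y + d y z)
    (hd_closed : IsClosed {p : X × X | d p.1 p.2 ≤ 1 / 3})
    (S : Set X) (hS_unc : ¬ S.Countable)
    (hS_sep : ∀ p ∈ S, ∀ q ∈ S, p ≠ q → 1 / 2 ≤ d p q) :
    ∃ F : List Bool → Set X,
      (∀ s, (F s).Nonempty ∧ IsClosed (F s)) ∧
      (∀ s t : List Bool, s <+: t → F t ⊆ F s) ∧
      (∀ s : List Bool, ∀ x ∈ F (s ++ [false]), ∀ y ∈ F (s ++ [true]), 1 / 3 < d x y) := by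
  refine ⟨fun s => closure (tree d hd_closed S hS_sep hS_unc s.reverse).1.1,
    ?_, ?_, ?_⟩
  · intro s
    obtain ⟨-, hsub, -, hunc⟩ := (tree d hd_closed S hS_sep hS_unc s.reverse).2
    have hne : (tree d hd_closed S hS_sep hS_unc s.reverse).1.2.Nonempty := by
      rw [Set.nonempty_iff_ne_empty]
      intro hemp
      rw [hemp] at hunc
      exact hunc countable_empty
    exact ⟨(hne.mono hsub).closure, isClosed_closure⟩
  · rintro s t ⟨u, rfl⟩
    dsimp only
    rw [List.reverse_append]
    exact closure_mono (tree_append_subset d hd_closed S hS_sep hS_unc _ _)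
  · intro s x hx y hy
    have h := tree_sep d hd_closed S hS_sep hS_unc s.reverse
    dsimp only at hx hy
    rw [List.reverse_append] at hx hy
    simp only [List.reverse_cons, List.reverse_nil, List.nil_append,
      List.singleton_append] at hx hy
    exact h x hx y hy
end

section
/- Let α, β ∈ ℝ be such that 1, α, β are linearly independent over ℚ. Then for every ε > 0 there exist a positive integer n and integers k, ℓ such that |nα − k| < ε and |nβ − ℓ − 1/2| < ε. -/
lemma floor_eq_abs_lt_one {x y : ℝ} (h : ⌊x⌋ = ⌊y⌋) : |x - y| < 1 := by
  have hc : ((⌊x⌋ : ℤ) : ℝ) = ((⌊y⌋ : ℤ) : ℝ) := by exact_mod_cast h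
  rw [abs_sub_lt_iff]
  constructor <;> nlinarith [Int.floor_le x, Int.floor_le y, Int.lt_floor_add_one x,
    Int.lt_floor_add_one y]

lemma exists_small (α β : ℝ) {δ : ℝ} (hδ : 0 < δ) :
    ∃ n k l : ℤ, 0 < n ∧ |(n : ℝ) * α - k| < δ ∧ |(n : ℝ) * β - l| < δ := by
  obtain ⟨N, hN⟩ := exists_nat_one_div_lt hδ
  set M : ℕ := N + 1 with hM
  have hMpos : (0:ℝ) < M := by positivity
  have hδM : 1 / (M:ℝ) < δ := by rw [hM]; push_cast; exact hN
  set f : ℕ → ℤ × ℤ := fun n =>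
    (⌊(M:ℝ) * Int.fract (n * α)⌋, ⌊(M:ℝ) * Int.fract (n * β)⌋) with hf
  have hmaps : ∀ n ∈ Finset.range (M * M + 1), f n ∈
      Finset.Ico (0:ℤ) M ×ˢ Finset.Ico (0:ℤ) M := by
    intro n _
    simp only [f, Finset.mem_product, Finset.mem_Ico]
    refine ⟨⟨Int.floor_nonneg.mpr (mul_nonneg hMpos.le (Int.fract_nonneg _)), ?_⟩,
      ⟨Int.floor_nonneg.mpr (mul_nonneg hMpos.le (Int.fract_nonneg _)), ?_⟩⟩ <;>
    · rw [Int.floor_lt]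
      push_cast
      nlinarith [Int.fract_lt_one ((n:ℝ) * α), Int.fract_lt_one ((n:ℝ) * β),
        Int.fract_nonneg ((n:ℝ) * α), Int.fract_nonneg ((n:ℝ) * β)]
  have hcard : (Finset.Ico (0:ℤ) M ×ˢ Finset.Ico (0:ℤ) M).card < (Finset.range (M*M+1)).card := by
    rw [Finset.card_product, Finset.card_range]
    simp [Int.card_Ico]
  obtain ⟨a, ha, b, hb, hne, heq⟩ :=
    Finset.exists_ne_map_eq_of_card_lt_of_maps_to hcard hmaps
  have key2 : ∀ x y : ℝ, ⌊(M:ℝ) * Int.fract x⌋ = ⌊(M:ℝ) * Int.fract y⌋ →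
      |Int.fract x - Int.fract y| < δ := by
    intro x y h
    have h1 := floor_eq_abs_lt_one h
    rw [abs_sub_lt_iff] at h1 ⊢
    have c1 : Int.fract x - Int.fract y < 1/(M:ℝ) := by
      rw [lt_div_iff₀ hMpos]; nlinarith [h1.1]
    have c2 : Int.fract y - Int.fract x < 1/(M:ℝ) := by
      rw [lt_div_iff₀ hMpos]; nlinarith [h1.2]
    constructor <;> linarith
  have key : ∀ a b : ℕ, b < a → f a = f b →
      ∃ n k l : ℤ, 0 < n ∧ |(n : ℝ) * α - k| < δ ∧ |(n : ℝ) * β - l| < δ := by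
    intro a b hba heq
    have h1 : (⌊(M:ℝ) * Int.fract (a * α)⌋ = ⌊(M:ℝ) * Int.fract (b * α)⌋) := by
      have := congrArg Prod.fst heq; simpa [f] using this
    have h2 : (⌊(M:ℝ) * Int.fract (a * β)⌋ = ⌊(M:ℝ) * Int.fract (b * β)⌋) := by
      have := congrArg Prod.snd heq; simpa [f] using this
    refine ⟨(a:ℤ) - b, ⌊(a:ℝ) * α⌋ - ⌊(b:ℝ) * α⌋, ⌊(a:ℝ) * β⌋ - ⌊(b:ℝ) * β⌋, by omega, ?_, ?_⟩
    · have h3 := key2 ((a:ℝ) * α) ((b:ℝ) * α) h1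
      rw [← Int.self_sub_floor, ← Int.self_sub_floor] at h3
      push_cast
      convert h3 using 2
      ring
    · have h3 := key2 ((a:ℝ) * β) ((b:ℝ) * β) h2
      rw [← Int.self_sub_floor, ← Int.self_sub_floor] at h3
      push_cast
      convert h3 using 2
      ring
  rcases lt_or_gt_of_ne hne with h | h
  · exact key b a h heq.symm
  · exact key a b h heq

set_option maxHeartbeats 1600000 in
/-- If `1, α, β` are linearly independent over `ℚ`, then for every `ε > 0` there are a
positive integer `n` and integers `k, ℓ` with `|nα − k| < ε` and `|nβ − ℓ − 1/2| < ε`. -/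
theorem simultaneous_approximation (α β : ℝ)
    (hind : ∀ q₀ q₁ q₂ : ℚ, (q₀ : ℝ) + q₁ * α + q₂ * β = 0 → q₀ = 0 ∧ q₁ = 0 ∧ q₂ = 0)
    (ε : ℝ) (hε : 0 < ε) :
    ∃ n : ℕ, 0 < n ∧ ∃ k l : ℤ, |(n : ℝ) * α - k| < ε ∧ |(n : ℝ) * β - l - 1 / 2| < ε := by
  set ε' : ℝ := min ε (1/4) with hε'def
  have hε' : 0 < ε' := lt_min hε (by norm_num)
  have hε'le : ε' ≤ ε := min_le_left _ _
  have hε'4 : ε' ≤ 1/4 := min_le_right _ _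
  obtain ⟨n, k, l, hn, hak, hbl⟩ := exists_small α β (show (0:ℝ) < ε'/2 by linarith)
  set u : ℝ := (n:ℝ) * α - k with hu_def
  set w : ℝ := (n:ℝ) * β - l with hw_def
  have hu : u ≠ 0 := by
    intro h0
    have hrel : ((-k : ℚ) : ℝ) + ((n : ℚ) : ℝ) * α + ((0:ℚ) : ℝ) * β = 0 := by
      push_cast
      simp only [hu_def] at h0
      linarith
    have := (hind _ _ _ hrel).2.1
    have hn0 : (n : ℚ) = 0 := this
    have : n = 0 := by exact_mod_cast hn0
    omega
  have hr2 : 0 < u^2 + w^2 := by positivity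
  set r2 : ℝ := u^2 + w^2 with hr2def
  -- the subgroup of values of the linear form  (x,y) ↦ -w x + u y  on the orbit lattice
  set S : AddSubgroup ℝ :=
    { carrier := {x | ∃ c p q : ℤ, x = c * (u * β - w * α) + p * w + q * u}
      zero_mem' := ⟨0, 0, 0, by push_cast; ring⟩
      add_mem' := by
        rintro x y ⟨c, p, q, rfl⟩ ⟨c', p', q', rfl⟩
        exact ⟨c + c', p + p', q + q', by push_cast; ring⟩
      neg_mem' := by
        rintro x ⟨c, p, q, rfl⟩
        exact ⟨-c, -p, -q, by push_cast; ring⟩ } with hSdef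
  rcases AddSubgroup.dense_or_cyclic S with hd | ⟨a, ha⟩
  · -- dense case
    set η : ℝ := (ε'/4) * r2 / (|u| + |w| + 1) with hηdef
    have hη : 0 < η := by positivity
    have hτ : (u/2 : ℝ) ∈ closure (S : Set ℝ) := hd _
    obtain ⟨s₀, hs₀S, hdist⟩ := Metric.mem_closure_iff.mp hτ η hη
    obtain ⟨c, p, q, hs₀⟩ := hs₀S
    set A : ℝ := (p:ℝ) - c * α with hA_def
    set B : ℝ := 1/2 - (c * β + q) with hB_def
    set s : ℝ := -w * A + u * B with hs_def
    have hs : |s| < η := by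
      have : s = u/2 - s₀ := by rw [hs_def, hs₀, hA_def, hB_def]; ring
      rw [this, ← Real.dist_eq]
      exact hdist
    set t : ℝ := (A * u + B * w) / r2 with ht_def
    set m : ℤ := round t with hm_def
    have htm : |t - (m:ℝ)| ≤ 1/2 := by rw [hm_def]; exact abs_sub_round t
    have hA : A - m * u = (t - m) * u - s * w / r2 := by
      rw [ht_def, hs_def]; field_simp; ring
    have hB : B - m * w = (t - m) * w + s * u / r2 := by
      rw [ht_def, hs_def]; field_simp; ring
    have hsw : |s| * |w| / r2 ≤ ε'/4 := by
      rw [div_le_iff₀ hr2]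
      have h1 : |s| * |w| ≤ η * |w| :=
        mul_le_mul_of_nonneg_right hs.le (abs_nonneg _)
      have h2 : η * |w| ≤ ε'/4 * r2 := by
        rw [hηdef]
        rw [div_mul_eq_mul_div, div_le_iff₀ (by positivity : (0:ℝ) < |u| + |w| + 1)]
        nlinarith [mul_nonneg (mul_nonneg (by linarith : (0:ℝ) ≤ ε'/4) hr2.le)
          (by positivity : (0:ℝ) ≤ |u| + 1)]
      linarith
    have hsu : |s| * |u| / r2 ≤ ε'/4 := by
      rw [div_le_iff₀ hr2]
      have h1 : |s| * |u| ≤ η * |u| :=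
        mul_le_mul_of_nonneg_right hs.le (abs_nonneg _)
      have h2 : η * |u| ≤ ε'/4 * r2 := by
        rw [hηdef]
        rw [div_mul_eq_mul_div, div_le_iff₀ (by positivity : (0:ℝ) < |u| + |w| + 1)]
        nlinarith [mul_nonneg (mul_nonneg (by linarith : (0:ℝ) ≤ ε'/4) hr2.le)
          (by positivity : (0:ℝ) ≤ |w| + 1)]
      linarith
    have bound1 : |A - m * u| ≤ ε'/2 := by
      rw [hA]
      calc |(t - m) * u - s * w / r2| ≤ |(t - m) * u| + |s * w / r2| := abs_sub _ _
        _ = |t - m| * |u| + |s| * |w| / r2 := by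
            rw [abs_mul, abs_div, abs_mul, abs_of_pos hr2]
        _ ≤ (1/2) * (ε'/2) + ε'/4 := by
            have : |t - m| * |u| ≤ (1/2) * (ε'/2) :=
              mul_le_mul htm hak.le (abs_nonneg _) (by norm_num)
            linarith
        _ = ε'/2 := by ring
    have bound2 : |B - m * w| ≤ ε'/2 := by
      rw [hB]
      calc |(t - m) * w + s * u / r2| ≤ |(t - m) * w| + |s * u / r2| := abs_add_le _ _
        _ = |t - m| * |w| + |s| * |u| / r2 := by
            rw [abs_mul, abs_div, abs_mul, abs_of_pos hr2]
        _ ≤ (1/2) * (ε'/2) + ε'/4 := by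
            have : |t - m| * |w| ≤ (1/2) * (ε'/2) :=
              mul_le_mul htm hbl.le (abs_nonneg _) (by norm_num)
            linarith
        _ = ε'/2 := by ring
    set n' : ℤ := c + m * n with hn'def
    set k' : ℤ := p + m * k with hk'def
    set l' : ℤ := m * l - q with hl'def
    have habs1 : |(n':ℝ) * α - k'| ≤ ε'/2 := by
      have he : A - m * u = -((n':ℝ) * α - k') := by
        rw [hA_def, hu_def, hn'def, hk'def]; push_cast; ring
      rw [he, abs_neg] at bound1
      exact bound1
    have habs2 : |(n':ℝ) * β - l' - 1/2| ≤ ε'/2 := by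
      have he : B - m * w = -((n':ℝ) * β - l' - 1/2) := by
        rw [hB_def, hw_def, hn'def, hl'def]; push_cast; ring
      rw [he, abs_neg] at bound2
      exact bound2
    have hhalf : ε'/2 < ε := by linarith
    have hn'0 : n' ≠ 0 := by
      intro h0
      rw [h0] at habs2
      have h1 : |(0:ℝ) * β - l' - 1/2| = |(l':ℝ) + 1/2| := by
        rw [show (0:ℝ) * β - l' - 1/2 = -((l':ℝ) + 1/2) by ring, abs_neg]
      rw [Int.cast_zero, h1] at habs2
      have h2 : (1:ℝ)/2 ≤ |(l':ℝ) + 1/2| := by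
        rcases le_or_gt 0 l' with hl | hl
        · have : (0:ℝ) ≤ l' := by exact_mod_cast hl
          rw [abs_of_nonneg (by linarith)]; linarith
        · have : (l' : ℤ) ≤ -1 := by omega
          have h3 : (l':ℝ) ≤ -1 := by exact_mod_cast this
          rw [abs_of_nonpos (by linarith)]; linarith
      linarith
    clear_value n' k' l'
    rcases lt_trichotomy n' 0 with hneg | hzero | hpos
    · refine ⟨(-n').toNat, by omega, -k', -l' - 1, ?_, ?_⟩
      · have hc : (((-n').toNat : ℕ) : ℝ) = -(n' : ℝ) := by
          exact_mod_cast Int.toNat_of_nonneg (by omega : (0:ℤ) ≤ -n')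
        rw [hc]
        calc |-(n':ℝ) * α - (-k' : ℤ)| = |(n':ℝ) * α - k'| := by
              rw [show -(n':ℝ) * α - ((-k' : ℤ):ℝ) = -((n':ℝ) * α - k') by push_cast; ring,
                abs_neg]
          _ ≤ ε'/2 := habs1
          _ < ε := hhalf
      · have hc : (((-n').toNat : ℕ) : ℝ) = -(n' : ℝ) := by
          exact_mod_cast Int.toNat_of_nonneg (by omega : (0:ℤ) ≤ -n')
        rw [hc]
        calc |-(n':ℝ) * β - ((-l' - 1 : ℤ):ℝ) - 1/2| = |(n':ℝ) * β - l' - 1/2| := by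
              rw [show -(n':ℝ) * β - ((-l' - 1 : ℤ):ℝ) - 1/2
                  = -((n':ℝ) * β - l' - 1/2) by push_cast; ring, abs_neg]
          _ ≤ ε'/2 := habs2
          _ < ε := hhalf
    · exact absurd hzero hn'0
    · refine ⟨n'.toNat, by omega, k', l', ?_, ?_⟩
      · have hc : ((n'.toNat : ℕ) : ℝ) = (n' : ℝ) := by
          exact_mod_cast Int.toNat_of_nonneg (by omega : (0:ℤ) ≤ n')
        rw [hc]
        exact lt_of_le_of_lt habs1 hhalf
      · have hc : ((n'.toNat : ℕ) : ℝ) = (n' : ℝ) := by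
          exact_mod_cast Int.toNat_of_nonneg (by omega : (0:ℤ) ≤ n')
        rw [hc]
        exact lt_of_le_of_lt habs2 hhalf
  · -- cyclic case: contradiction with linear independence
    exfalso
    have humem : u ∈ S := ⟨0, 0, 1, by push_cast; ring⟩
    have hwmem : w ∈ S := ⟨0, 1, 0, by push_cast; ring⟩
    have hvmem : u * β - w * α ∈ S := ⟨1, 0, 0, by push_cast; ring⟩
    rw [ha, AddSubgroup.mem_closure_singleton] at humem hwmem hvmem
    obtain ⟨j, hj⟩ := humem
    obtain ⟨i, hi⟩ := hwmem
    obtain ⟨k₀, hk₀⟩ := hvmem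
    simp only [zsmul_eq_mul] at hj hi hk₀
    have ha0 : a ≠ 0 := by
      intro h0
      rw [h0, mul_zero] at hj
      exact hu hj.symm
    have hrel : a * ((-(k₀:ℝ)) + (-(i:ℝ)) * α + (j:ℝ) * β) = 0 := by
      have : (j:ℝ) * a * β - (i:ℝ) * a * α = (k₀:ℝ) * a := by
        rw [hj, hi, hk₀]
      nlinarith [this]
    have hrel2 : ((-k₀ : ℚ) : ℝ) + ((-i : ℚ) : ℝ) * α + ((j : ℚ) : ℝ) * β = 0 := by
      have := mul_eq_zero.mp hrel
      rcases this with h | h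
      · exact absurd h ha0
      · push_cast; linarith
    have hj0 : ((j : ℚ)) = 0 := (hind _ _ _ hrel2).2.2
    have : j = 0 := by exact_mod_cast hj0
    rw [this] at hj
    simp at hj
    exact hu hj.symm
end

section
/- Let α, β ∈ ℝ be such that 1, α, β are linearly independent over ℚ. Let (Ω, μ) be a probability space, T an invertible measure-preserving transformation of (Ω, μ), and a, b ⊆ Ω measurable sets such that for every n ∈ ℕ, μ(a Δ Tⁿ(a)) = 2·dist(nα, ℤ) and μ(b Δ Tⁿ(b)) = 2·dist(nβ, ℤ), where dist(x, ℤ) = min_{k ∈ ℤ} |x − k|. Then μ(a Δ b) ≥ 1/2. -/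
open MeasureTheory Set
open Filter Topology


section KronAux

variable (α β : ℝ)

/-- The subgroup `ℤ(α,β) + ℤ²` of `ℝ²`. -/
def krG : AddSubgroup (ℝ × ℝ) where
  carrier := {v | ∃ n p r : ℤ, v = ((n : ℝ) * α + p, (n : ℝ) * β + r)}
  zero_mem' := ⟨0, 0, 0, by norm_num; rfl⟩
  add_mem' := by
    rintro x y ⟨n, p, r, rfl⟩ ⟨n', p', r', rfl⟩
    refine ⟨n + n', p + p', r + r', ?_⟩
    simp only [Prod.mk_add_mk, Prod.mk.injEq]
    constructor <;> push_cast <;> ring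
  neg_mem' := by
    rintro x ⟨n, p, r, rfl⟩
    refine ⟨-n, -p, -r, ?_⟩
    simp only [Prod.neg_mk, Prod.mk.injEq]
    constructor <;> push_cast <;> ring

lemma krG_small (hirrα : ∀ n p : ℤ, (n : ℝ) * α + p = 0 → n = 0)
    {ε : ℝ} (hε : 0 < ε) : ∃ v ∈ krG α β, v ≠ 0 ∧ ‖v‖ < ε := by
  obtain ⟨N, hN⟩ := exists_nat_gt (1 / ε)
  have hN0 : 0 < (N : ℝ) := lt_trans (by positivity) hN
  have hmaps : ∀ k ∈ Finset.range (N * N + 1),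
      (fun k : ℕ => ((⌊(N : ℝ) * Int.fract ((k : ℝ) * α)⌋.toNat),
        (⌊(N : ℝ) * Int.fract ((k : ℝ) * β)⌋.toNat))) k ∈
        Finset.range N ×ˢ Finset.range N := by
    intro k _
    have h1 : ∀ x : ℝ, ⌊(N : ℝ) * Int.fract x⌋.toNat < N := by
      intro x
      have hf : (N : ℝ) * Int.fract x < (N : ℤ) := by
        push_cast
        nlinarith [Int.fract_lt_one x, Int.fract_nonneg x]
      have h2 := Int.floor_lt.2 hf
      have hN0' : 0 < N := by exact_mod_cast hN0
      omega
    simp only [Finset.mem_product, Finset.mem_range]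
    exact ⟨h1 _, h1 _⟩
  obtain ⟨k₁, hk₁, k₂, hk₂, hne, heq⟩ :=
    Finset.exists_ne_map_eq_of_card_lt_of_maps_to
      (by simpa using Nat.lt_succ_self (N * N)) hmaps
  simp only [Prod.mk.injEq] at heq
  have hfl : ∀ γ : ℝ, ⌊(N : ℝ) * Int.fract ((k₁ : ℝ) * γ)⌋.toNat
      = ⌊(N : ℝ) * Int.fract ((k₂ : ℝ) * γ)⌋.toNat →
      |((k₁ : ℤ) - (k₂ : ℤ) : ℝ) * γ + ((⌊(k₂ : ℝ) * γ⌋ - ⌊(k₁ : ℝ) * γ⌋ : ℤ) : ℝ)| < ε := by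
    intro γ h
    have hnn : ∀ x : ℝ, (0 : ℤ) ≤ ⌊(N : ℝ) * Int.fract x⌋ := by
      intro x
      exact Int.floor_nonneg.2 (mul_nonneg hN0.le (Int.fract_nonneg x))
    have hfeq : ⌊(N : ℝ) * Int.fract ((k₁ : ℝ) * γ)⌋ = ⌊(N : ℝ) * Int.fract ((k₂ : ℝ) * γ)⌋ := by
      have := hnn ((k₁ : ℝ) * γ); have := hnn ((k₂ : ℝ) * γ); omega
    have h1 : |(N : ℝ) * Int.fract ((k₁ : ℝ) * γ) - (N : ℝ) * Int.fract ((k₂ : ℝ) * γ)| < 1 :=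
      Int.abs_sub_lt_one_of_floor_eq_floor hfeq
    rw [← mul_sub, abs_mul, abs_of_pos hN0] at h1
    have h2 : |Int.fract ((k₁ : ℝ) * γ) - Int.fract ((k₂ : ℝ) * γ)| < 1 / N := by
      rw [lt_div_iff₀ hN0]; linarith
    have h3 : 1 / (N : ℝ) < ε := by
      rw [div_lt_iff₀ hN0]
      rw [div_lt_iff₀ hε] at hN
      nlinarith
    have hrw : ((k₁ : ℤ) - (k₂ : ℤ) : ℝ) * γ + ((⌊(k₂ : ℝ) * γ⌋ - ⌊(k₁ : ℝ) * γ⌋ : ℤ) : ℝ)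
        = Int.fract ((k₁ : ℝ) * γ) - Int.fract ((k₂ : ℝ) * γ) := by
      rw [Int.fract, Int.fract]; push_cast; ring
    rw [hrw]
    exact lt_trans h2 h3
  refine ⟨(((k₁ : ℤ) - (k₂ : ℤ) : ℝ) * α + ((⌊(k₂ : ℝ) * α⌋ - ⌊(k₁ : ℝ) * α⌋ : ℤ) : ℝ),
      ((k₁ : ℤ) - (k₂ : ℤ) : ℝ) * β + ((⌊(k₂ : ℝ) * β⌋ - ⌊(k₁ : ℝ) * β⌋ : ℤ) : ℝ)),
    ⟨(k₁ : ℤ) - (k₂ : ℤ), ⌊(k₂ : ℝ) * α⌋ - ⌊(k₁ : ℝ) * α⌋, ⌊(k₂ : ℝ) * β⌋ - ⌊(k₁ : ℝ) * β⌋,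
      by push_cast; ring_nf⟩, ?_, ?_⟩
  · intro h0
    rw [Prod.ext_iff] at h0
    simp only [Prod.fst_zero, Prod.snd_zero] at h0
    have := hirrα ((k₁ : ℤ) - (k₂ : ℤ)) (⌊(k₂ : ℝ) * α⌋ - ⌊(k₁ : ℝ) * α⌋)
      (by push_cast; push_cast at h0; linarith [h0.1])
    have : k₁ = k₂ := by omega
    exact hne this
  · rw [Prod.norm_def]
    simp only [Real.norm_eq_abs]
    exact max_lt (hfl α heq.1) (hfl β heq.2)

end KronAux

section KronAux2
variable (α β : ℝ)

lemma krG_line (hirrα : ∀ n p : ℤ, (n : ℝ) * α + p = 0 → n = 0) :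
    ∃ u : ℝ × ℝ, ‖u‖ = 1 ∧ ∀ t : ℝ, t • u ∈ closure (krG α β : Set (ℝ × ℝ)) := by
  have h := fun k : ℕ => krG_small α β hirrα (ε := 1 / (k + 1)) (by positivity)
  choose v hvG hv0 hvε using h
  have hc : ∀ k, (0 : ℝ) < ‖v k‖ := fun k => norm_pos_iff.2 (hv0 k)
  have hu : ∀ k, ‖v k‖⁻¹ • v k ∈ Metric.sphere (0 : ℝ × ℝ) 1 := by
    intro k
    simp [norm_smul, abs_of_pos (inv_pos.2 (hc k)), inv_mul_cancel₀ (hc k).ne']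
  obtain ⟨u, huS, φ, hφ, hlim⟩ := (isCompact_sphere (0 : ℝ × ℝ) 1).tendsto_subseq hu
  have hunorm : ‖u‖ = 1 := by simpa using huS
  refine ⟨u, hunorm, fun t => ?_⟩
  have hbnd : ∀ k : ℕ, dist ((⌊t / ‖v (φ k)‖⌋ : ℝ) * ‖v (φ k)‖) t ≤ 1 / (k + 1 : ℝ) := by
    intro k
    set c := ‖v (φ k)‖ with hcdef
    have hc0 : (0 : ℝ) < c := hc _
    have habs : |(⌊t / c⌋ : ℝ) - t / c| ≤ 1 := by
      rw [abs_le]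
      constructor
      · linarith [Int.lt_floor_add_one (t / c)]
      · linarith [Int.floor_le (t / c)]
    have h1 : (⌊t / c⌋ : ℝ) * c - t = ((⌊t / c⌋ : ℝ) - t / c) * c := by
      field_simp
    have h2 : dist ((⌊t / c⌋ : ℝ) * c) t ≤ c := by
      rw [Real.dist_eq, h1, abs_mul, abs_of_pos hc0]
      nlinarith
    have h3 : c ≤ 1 / (k + 1 : ℝ) := by
      have h4 : c < 1 / ((φ k : ℝ) + 1) := hvε _
      have h5 : (1 : ℝ) / ((φ k : ℝ) + 1) ≤ 1 / (k + 1 : ℝ) := by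
        apply one_div_le_one_div_of_le (by positivity)
        have h6 : ((k : ℕ) : ℝ) ≤ ((φ k : ℕ) : ℝ) := Nat.cast_le.2 hφ.le_apply
        push_cast
        linarith
      linarith
    linarith
  have hr : Tendsto (fun k => (⌊t / ‖v (φ k)‖⌋ : ℝ) * ‖v (φ k)‖) atTop (𝓝 t) := by
    rw [tendsto_iff_dist_tendsto_zero]
    exact squeeze_zero (fun k => dist_nonneg) hbnd tendsto_one_div_add_atTop_nhds_zero_nat
  have hw_eq : ∀ k : ℕ, (⌊t / ‖v (φ k)‖⌋ : ℤ) • v (φ k)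
      = ((⌊t / ‖v (φ k)‖⌋ : ℝ) * ‖v (φ k)‖) • (‖v (φ k)‖⁻¹ • v (φ k)) := by
    intro k
    rw [mul_smul, smul_inv_smul₀ (hc _).ne']
    exact (Int.cast_smul_eq_zsmul ℝ _ _).symm
  have hwlim : Tendsto (fun k => (⌊t / ‖v (φ k)‖⌋ : ℤ) • v (φ k)) atTop (𝓝 (t • u)) := by
    rw [funext hw_eq]
    exact hr.smul hlim
  exact mem_closure_of_tendsto hwlim (Filter.Eventually.of_forall fun k =>
    AddSubgroup.zsmul_mem _ (hvG _) _)

end KronAux2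

section KronAux3
variable (α β : ℝ)

lemma krG_dense (hirr : ∀ n m p : ℤ, (n : ℝ) * α + m * β + p = 0 → n = 0 ∧ m = 0) :
    ∀ z : ℝ × ℝ, z ∈ closure (krG α β : Set (ℝ × ℝ)) := by
  have hirrα : ∀ n p : ℤ, (n : ℝ) * α + p = 0 → n = 0 := by
    intro n p h
    exact (hirr n 0 p (by push_cast; linarith)).1
  obtain ⟨u, hunorm, hline⟩ := krG_line α β hirrα
  set S := (krG α β).topologicalClosure with hSdef
  have hSc : (S : Set (ℝ × ℝ)) = closure (krG α β : Set (ℝ × ℝ)) := rfl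
  have hsub : ∀ w, w ∈ (krG α β) → w ∈ S := fun w hw => (krG α β).le_topologicalClosure hw
  have hg1 : ((1 : ℝ), (0 : ℝ)) ∈ S := hsub _ ⟨0, 1, 0, by norm_num⟩
  have hg2 : ((0 : ℝ), (1 : ℝ)) ∈ S := hsub _ ⟨0, 0, 1, by norm_num⟩
  have hg3 : (α, β) ∈ S := hsub _ ⟨1, 0, 0, by norm_num⟩
  have hlineS : ∀ t : ℝ, t • u ∈ S := fun t => by
    show t • u ∈ (S : Set (ℝ × ℝ)); rw [hSc]; exact hline t
  intro z
  rw [← hSc]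
  show z ∈ S
  by_cases hu2 : u.2 = 0
  · -- horizontal line case
    have hu1 : u.1 ≠ 0 := by
      intro h1
      rw [Prod.norm_def, h1, hu2] at hunorm
      norm_num at hunorm
    have key2 : ∀ w : ℝ × ℝ, w ∈ S → ((0 : ℝ), w.2) ∈ S := by
      intro w hw
      have hmem := S.sub_mem hw (hlineS (w.1 / u.1))
      have heq : w - (w.1 / u.1) • u = ((0 : ℝ), w.2) := by
        apply Prod.ext
        · simp only [Prod.fst_sub, Prod.smul_fst, smul_eq_mul]
          field_simp; ring
        · simp only [Prod.snd_sub, Prod.smul_snd, smul_eq_mul, hu2]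
          ring
      rwa [heq] at hmem
    set W : AddSubgroup ℝ := S.comap (AddMonoidHom.inr ℝ ℝ) with hWdef
    have hWmem : ∀ y : ℝ, y ∈ W ↔ ((0 : ℝ), y) ∈ S := fun y => Iff.rfl
    rcases W.dense_or_cyclic with hd | ⟨c, hcyc⟩
    · have hWclosed : IsClosed (W : Set ℝ) := by
        have : (W : Set ℝ) = (fun y : ℝ => ((0 : ℝ), y)) ⁻¹' (S : Set (ℝ × ℝ)) := rfl
        rw [this]
        exact (AddSubgroup.isClosed_topologicalClosure _).preimage
          (continuous_const.prodMk continuous_id)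
      have hWall : ∀ y : ℝ, y ∈ W := by
        have h1 : (W : Set ℝ) = Set.univ := by
          rw [← hWclosed.closure_eq]; exact hd.closure_eq
        intro y; rw [← SetLike.mem_coe, h1]; trivial
      have hz2 : ((0 : ℝ), z.2) ∈ S := (hWmem z.2).1 (hWall z.2)
      have heq : ((0 : ℝ), z.2) + (z.1 / u.1) • u = z := by
        apply Prod.ext
        · simp only [Prod.fst_add, Prod.smul_fst, smul_eq_mul]
          field_simp; ring
        · simp only [Prod.snd_add, Prod.smul_snd, smul_eq_mul, hu2]
          ring
      exact heq ▸ S.add_mem hz2 (hlineS _)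
    · exfalso
      have h1W : (1 : ℝ) ∈ W := (hWmem 1).2 hg2
      have hβW : β ∈ W := (hWmem β).2 (key2 (α, β) hg3)
      rw [hcyc, AddSubgroup.mem_closure_singleton] at h1W hβW
      obtain ⟨n, hn⟩ := h1W
      obtain ⟨m, hm⟩ := hβW
      rw [zsmul_eq_mul] at hn hm
      have hn0 : n ≠ 0 := by
        rintro rfl; norm_num at hn
      refine hn0 (hirr 0 n (-m) ?_).2
      push_cast
      linear_combination (m : ℝ) * hn - (n : ℝ) * hm
  · -- transversal line case
    have key2 : ∀ w : ℝ × ℝ, w ∈ S → (w.1 - (u.1 / u.2) * w.2, (0 : ℝ)) ∈ S := by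
      intro w hw
      have hmem := S.sub_mem hw (hlineS (w.2 / u.2))
      have heq : w - (w.2 / u.2) • u = (w.1 - (u.1 / u.2) * w.2, (0 : ℝ)) := by
        apply Prod.ext
        · simp only [Prod.fst_sub, Prod.smul_fst, smul_eq_mul]
          ring
        · simp only [Prod.snd_sub, Prod.smul_snd, smul_eq_mul]
          field_simp; ring
      rwa [heq] at hmem
    set V : AddSubgroup ℝ := S.comap (AddMonoidHom.inl ℝ ℝ) with hVdef
    have hVmem : ∀ x : ℝ, x ∈ V ↔ (x, (0 : ℝ)) ∈ S := fun x => Iff.rfl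
    rcases V.dense_or_cyclic with hd | ⟨c, hcyc⟩
    · have hVclosed : IsClosed (V : Set ℝ) := by
        have : (V : Set ℝ) = (fun x : ℝ => (x, (0 : ℝ))) ⁻¹' (S : Set (ℝ × ℝ)) := rfl
        rw [this]
        exact (AddSubgroup.isClosed_topologicalClosure _).preimage
          (continuous_id.prodMk continuous_const)
      have hVall : ∀ x : ℝ, x ∈ V := by
        have h1 : (V : Set ℝ) = Set.univ := by
          rw [← hVclosed.closure_eq]; exact hd.closure_eq
        intro x; rw [← SetLike.mem_coe, h1]; trivial
      have hz1 : (z.1 - (u.1 / u.2) * z.2, (0 : ℝ)) ∈ S := (hVmem _).1 (hVall _)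
      have heq : (z.1 - (u.1 / u.2) * z.2, (0 : ℝ)) + (z.2 / u.2) • u = z := by
        apply Prod.ext
        · simp only [Prod.fst_add, Prod.smul_fst, smul_eq_mul]
          ring
        · simp only [Prod.snd_add, Prod.smul_snd, smul_eq_mul]
          field_simp; ring
      exact heq ▸ S.add_mem hz1 (hlineS _)
    · exfalso
      have h1V : (1 : ℝ) ∈ V := (hVmem 1).2 hg1
      have hsV : -(u.1 / u.2) ∈ V :=
        (hVmem _).2 (by simpa using key2 ((0 : ℝ), (1 : ℝ)) hg2)
      have hαV : α - (u.1 / u.2) * β ∈ V := (hVmem _).2 (key2 (α, β) hg3)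
      rw [hcyc, AddSubgroup.mem_closure_singleton] at h1V hsV hαV
      obtain ⟨n, hn⟩ := h1V
      obtain ⟨m, hm⟩ := hsV
      obtain ⟨l, hl⟩ := hαV
      rw [zsmul_eq_mul] at hn hm hl
      have hn0 : n ≠ 0 := by rintro rfl; norm_num at hn
      refine hn0 (hirr n m (-l) ?_).1
      push_cast
      linear_combination ((l : ℝ) - (m : ℝ) * β) * hn + (n : ℝ) * β * hm - (n : ℝ) * hl

end KronAux3

lemma kron_exists (α β : ℝ)
    (hirr : ∀ n m p : ℤ, (n : ℝ) * α + m * β + p = 0 → n = 0 ∧ m = 0)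
    {ε : ℝ} (hε : 0 < ε) (hε4 : ε < 1 / 4) :
    ∃ m : ℕ, (∀ k : ℤ, 1 / 2 - ε ≤ |(m : ℝ) * α - k|) ∧ ∃ r : ℤ, |(m : ℝ) * β - r| < ε := by
  have h := krG_dense α β hirr ((1 / 2 : ℝ), (0 : ℝ))
  rw [Metric.mem_closure_iff] at h
  obtain ⟨g, ⟨n, p, r, rfl⟩, hg⟩ := h ε hε
  rw [Prod.dist_eq, sup_lt_iff] at hg
  obtain ⟨h1, h2⟩ := hg
  rw [Real.dist_eq] at h1 h2
  simp only [zero_sub, abs_neg] at h2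
  have hhalf : ∀ j : ℤ, (1 / 2 : ℝ) ≤ |1 / 2 - (j : ℝ)| := by
    intro j
    rcases le_or_gt j 0 with hj | hj
    · have : (j : ℝ) ≤ 0 := by exact_mod_cast hj
      calc (1 / 2 : ℝ) ≤ 1 / 2 - j := by linarith
        _ ≤ |1 / 2 - (j : ℝ)| := le_abs_self _
    · have : (1 : ℝ) ≤ j := by exact_mod_cast hj
      calc (1 / 2 : ℝ) ≤ -(1 / 2 - j) := by linarith
        _ ≤ |1 / 2 - (j : ℝ)| := neg_le_abs _
  have hn0 : n ≠ 0 := by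
    rintro rfl
    have := hhalf p
    simp only [Int.cast_zero, zero_mul, zero_add] at h1
    linarith
  have hbound : ∀ k : ℤ, 1 / 2 - ε ≤ |(n : ℝ) * α - k| := by
    intro k
    have habs := abs_sub_abs_le_abs_sub (1 / 2 - (p : ℝ) - k) ((n : ℝ) * α - k)
    have heq : (1 / 2 - (p : ℝ) - k) - ((n : ℝ) * α - k) = 1 / 2 - ((n : ℝ) * α + p) := by
      ring
    rw [heq] at habs
    have hh := hhalf (p + k)
    push_cast at hh
    have hh' : (1 / 2 : ℝ) ≤ |1 / 2 - (p : ℝ) - k| := by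
      calc (1 / 2 : ℝ) ≤ |1 / 2 - ((p : ℝ) + k)| := hh
        _ = |1 / 2 - (p : ℝ) - k| := by ring_nf
    linarith
  refine ⟨n.natAbs, ?_, ?_⟩
  · intro k
    rcases le_or_gt 0 n with hn | hn
    · have hcast : ((n.natAbs : ℕ) : ℝ) = (n : ℝ) := by
        rw [Nat.cast_natAbs, Int.cast_abs]
        exact abs_of_nonneg (by exact_mod_cast hn)
      rw [hcast]; exact hbound k
    · have hcast : ((n.natAbs : ℕ) : ℝ) = -(n : ℝ) := by
        rw [Nat.cast_natAbs, Int.cast_abs]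
        exact abs_of_neg (by exact_mod_cast hn)
      rw [hcast]
      have : |(-(n : ℝ)) * α - k| = |(n : ℝ) * α - (-k : ℤ)| := by
        push_cast
        rw [← abs_neg]; ring_nf
      rw [this]; exact hbound (-k)
  · rcases le_or_gt 0 n with hn | hn
    · refine ⟨-r, ?_⟩
      have hcast : ((n.natAbs : ℕ) : ℝ) = (n : ℝ) := by
        rw [Nat.cast_natAbs, Int.cast_abs]
        exact abs_of_nonneg (by exact_mod_cast hn)
      rw [hcast]
      have : |(n : ℝ) * β - (-r : ℤ)| = |(n : ℝ) * β + r| := by push_cast; ring_nf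
      rw [this]; exact h2
    · refine ⟨r, ?_⟩
      have hcast : ((n.natAbs : ℕ) : ℝ) = -(n : ℝ) := by
        rw [Nat.cast_natAbs, Int.cast_abs]
        exact abs_of_neg (by exact_mod_cast hn)
      rw [hcast]
      have : |(-(n : ℝ)) * β - r| = |(n : ℝ) * β + r| := by
        rw [← abs_neg]; ring_nf
      rw [this]; exact h2

/-- If `1, α, β` are linearly independent over `ℚ`, `T` is an invertible measure-preserving
transformation of a probability space, and `a`, `b` are measurable sets such that
`μ(a Δ Tⁿ(a)) = 2·dist(nα, ℤ)` and `μ(b Δ Tⁿ(b)) = 2·dist(nβ, ℤ)` for every `n`, then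
`μ(a Δ b) ≥ 1/2`. -/
theorem symmDiff_ge_half_of_rotation_like {Ω : Type*} [MeasurableSpace Ω]
    (μ : Measure Ω) [IsProbabilityMeasure μ]
    (α β : ℝ)
    (hind : ∀ q₀ q₁ q₂ : ℚ, (q₀ : ℝ) + q₁ * α + q₂ * β = 0 → q₀ = 0 ∧ q₁ = 0 ∧ q₂ = 0)
    (T : Ω ≃ᵐ Ω) (hT : MeasurePreserving T μ μ)
    (a b : Set Ω) (ha : MeasurableSet a) (hb : MeasurableSet b)
    (haα : ∀ n : ℕ,
      μ (symmDiff a ((⇑T)^[n] '' a)) = ENNReal.ofReal (2 * ⨅ k : ℤ, |(n : ℝ) * α - k|))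
    (hbβ : ∀ n : ℕ,
      μ (symmDiff b ((⇑T)^[n] '' b)) = ENNReal.ofReal (2 * ⨅ k : ℤ, |(n : ℝ) * β - k|)) :
    1 / 2 ≤ μ (symmDiff a b) := by
  have hirr : ∀ n m p : ℤ, (n : ℝ) * α + m * β + p = 0 → n = 0 ∧ m = 0 := by
    intro n m p h
    have h' : ((p : ℚ) : ℝ) + (n : ℚ) * α + (m : ℚ) * β = 0 := by push_cast; linarith
    obtain ⟨-, h2, h3⟩ := hind p n m h'
    constructor
    · exact_mod_cast h2
    · exact_mod_cast h3
  -- measure chain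
  have hchain : ∀ m : ℕ, μ (symmDiff a ((⇑T)^[m] '' a))
      ≤ 2 * μ (symmDiff a b) + μ (symmDiff b ((⇑T)^[m] '' b)) := by
    intro m
    have hLI : Function.LeftInverse ((⇑T.symm)^[m]) ((⇑T)^[m]) :=
      Function.LeftInverse.iterate (fun x => T.symm_apply_apply x) m
    have hRI : Function.RightInverse ((⇑T.symm)^[m]) ((⇑T)^[m]) :=
      Function.LeftInverse.iterate (fun x => T.apply_symm_apply x) m
    have himg : Set.image ((⇑T)^[m]) = Set.preimage ((⇑T.symm)^[m]) :=
      Set.image_eq_preimage_of_inverse hLI hRI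
    have hmp : MeasurePreserving ((⇑T.symm)^[m]) μ μ :=
      (MeasurePreserving.symm T hT).iterate m
    have h2 : μ (symmDiff ((⇑T)^[m] '' b) ((⇑T)^[m] '' a)) = μ (symmDiff a b) := by
      rw [← image_symmDiff hLI.injective b a, himg,
        hmp.measure_preimage ((hb.symmDiff ha).nullMeasurableSet), symmDiff_comm]
    calc μ (symmDiff a ((⇑T)^[m] '' a))
        ≤ μ (symmDiff a b) + μ (symmDiff b ((⇑T)^[m] '' a)) := measure_symmDiff_le _ _ _
      _ ≤ μ (symmDiff a b) + (μ (symmDiff b ((⇑T)^[m] '' b))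
            + μ (symmDiff ((⇑T)^[m] '' b) ((⇑T)^[m] '' a))) :=
          add_le_add le_rfl (measure_symmDiff_le _ _ _)
      _ = 2 * μ (symmDiff a b) + μ (symmDiff b ((⇑T)^[m] '' b)) := by rw [h2]; ring
  set x := μ (symmDiff a b) with hxdef
  have hxfin : x ≠ ⊤ := measure_ne_top μ _
  have hxr : ∀ ε : ℝ, 0 < ε → ε < 1 / 4 → 1 - 4 * ε ≤ 2 * x.toReal := by
    intro ε hε hε4
    obtain ⟨m, hα', r, hβ'⟩ := kron_exists α β hirr hε hε4
    have hbdd : BddBelow (Set.range fun k : ℤ => |(m : ℝ) * β - k|) :=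
      ⟨0, by rintro _ ⟨k, rfl⟩; positivity⟩
    have hinfβ : (⨅ k : ℤ, |(m : ℝ) * β - k|) ≤ ε := le_of_lt (lt_of_le_of_lt (ciInf_le hbdd r) hβ')
    have hinfβ0 : 0 ≤ ⨅ k : ℤ, |(m : ℝ) * β - k| := le_ciInf fun k => abs_nonneg _
    have hinfα : 1 / 2 - ε ≤ ⨅ k : ℤ, |(m : ℝ) * α - k| := le_ciInf hα'
    have h1 := hchain m
    rw [haα m, hbβ m] at h1
    have hA : ENNReal.ofReal (2 * (1 / 2 - ε)) ≤ ENNReal.ofReal (2 * ⨅ k : ℤ, |(m : ℝ) * α - k|) :=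
      ENNReal.ofReal_le_ofReal (by linarith)
    have hB : ENNReal.ofReal (2 * ⨅ k : ℤ, |(m : ℝ) * β - k|) ≤ ENNReal.ofReal (2 * ε) :=
      ENNReal.ofReal_le_ofReal (by linarith)
    have hchain2 : ENNReal.ofReal (2 * (1 / 2 - ε)) ≤ 2 * x + ENNReal.ofReal (2 * ε) :=
      le_trans hA (le_trans h1 (add_le_add le_rfl hB))
    have hfin : (2 * x + ENNReal.ofReal (2 * ε)) ≠ ⊤ := by
      apply ENNReal.add_ne_top.2
      exact ⟨ENNReal.mul_ne_top (by norm_num) hxfin, ENNReal.ofReal_ne_top⟩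
    have htr := ENNReal.toReal_mono hfin hchain2
    rw [ENNReal.toReal_ofReal (by linarith), ENNReal.toReal_add
      (ENNReal.mul_ne_top (by norm_num) hxfin) ENNReal.ofReal_ne_top,
      ENNReal.toReal_mul, ENNReal.toReal_ofReal (by linarith), ENNReal.toReal_ofNat] at htr
    linarith
  have hx2 : 1 / 2 ≤ x.toReal := by
    by_contra hcon
    push_neg at hcon
    have hnn : 0 ≤ x.toReal := ENNReal.toReal_nonneg
    have hε : 0 < (1 / 2 - x.toReal) / 3 := by linarith
    have hε4 : (1 / 2 - x.toReal) / 3 < 1 / 4 := by linarith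
    have := hxr _ hε hε4
    linarith
  have hfinal : ENNReal.ofReal (1 / 2) ≤ ENNReal.ofReal x.toReal := ENNReal.ofReal_le_ofReal hx2
  rw [ENNReal.ofReal_toReal hxfin] at hfinal
  refine le_trans (le_of_eq ?_) hfinal
  rw [ENNReal.ofReal_div_of_pos (by norm_num), ENNReal.ofReal_one, ENNReal.ofReal_ofNat]
end

section
/- Let η be a function assigning to each finite binary string s a real number η_s ∈ [0, 1], and assume η is shift invariant: η_∅ = 1, and η_{s⌢0} + η_{s⌢1} = η_{0⌢s} + η_{1⌢s} = η_s for every finite binary string s. Then there exist a probability space (Ω, μ) and a sequence of measurable sets (a_m)_{m ∈ ℕ} such that for every k, n ∈ ℕ and every binary string s of length n, μ(⋂_{i<n} a_{k+i}^{s_i}) = η_s, where for a measurable set a we write a⁰ = a and a¹ = Ω ∖ a. -/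
open MeasureTheory Set


open Classical in
/-- digit sequence of a point `x` for the nested interval scheme determined by `η`. -/
noncomputable def seqD (η : List Bool → ℝ) : ℝ → ℕ → Bool
  | x, 0 => decide (η [false] ≤ x)
  | x, n+1 => if x < η [false] then seqD (fun t => η (false :: t)) x n
              else seqD (fun t => η (true :: t)) (x - η [false]) n

/-- left endpoint of the interval assigned to a string. -/
noncomputable def Lfun (η : List Bool → ℝ) : List Bool → ℝ
  | [] => 0
  | false :: s => Lfun (fun t => η (false :: t)) s
  | true :: s => η [false] + Lfun (fun t => η (true :: t)) s

def Good (η : List Bool → ℝ) : Prop :=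
  (∀ t, 0 ≤ η t) ∧ ∀ t, η (t ++ [false]) + η (t ++ [true]) = η t

lemma Good.cons {η : List Bool → ℝ} (h : Good η) (b : Bool) :
    Good (fun t => η (b :: t)) :=
  ⟨fun t => h.1 _, fun t => h.2 (b :: t)⟩

lemma Good.split {η : List Bool → ℝ} (h : Good η) : η [false] + η [true] = η [] :=
  h.2 []

lemma measurableSet_seqD (n : ℕ) : ∀ (η : List Bool → ℝ) (b : Bool),
    MeasurableSet {x : ℝ | seqD η x n = b} := by
  induction n with
  | zero =>
    intro η b
    cases b <;> simp only [seqD, decide_eq_true_eq, decide_eq_false_iff_not]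
    · exact (measurableSet_le measurable_const measurable_id).compl
    · exact measurableSet_le measurable_const measurable_id
  | succ n ih =>
    intro η b
    have : {x : ℝ | seqD η x (n+1) = b} =
        ({x : ℝ | x < η [false]} ∩ {x | seqD (fun t => η (false :: t)) x n = b}) ∪
        ({x : ℝ | x < η [false]}ᶜ ∩
          (fun x : ℝ => x - η [false]) ⁻¹' {y | seqD (fun t => η (true :: t)) y n = b}) := by
      ext x
      by_cases hx : x < η [false] <;> simp [seqD, hx]
    rw [this]
    exact ((measurableSet_lt measurable_id measurable_const).inter (ih _ _)).union
      (((measurableSet_lt measurable_id measurable_const).compl).inter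
        ((measurable_id.sub_const _) (ih _ _)))

lemma Lfun_bounds : ∀ (s : List Bool) (η : List Bool → ℝ), Good η →
    0 ≤ Lfun η s ∧ Lfun η s + η s ≤ η [] := by
  intro s
  induction s with
  | nil => intro η hη; simp [Lfun]
  | cons b s ih =>
    intro η hη
    cases b
    · have h := ih _ (hη.cons false)
      refine ⟨h.1, ?_⟩
      have : Lfun η (false :: s) + η (false :: s) ≤ η [false] := h.2
      have h2 : η [false] ≤ η [] := by
        have := hη.split; have := hη.1 [true]; linarith
      calc Lfun η (false :: s) + η (false :: s) ≤ η [false] := h.2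
        _ ≤ η [] := h2
    · have h := ih _ (hη.cons true)
      constructor
      · have := hη.1 [false]
        have := h.1
        simp only [Lfun]; linarith
      · have hs := hη.split
        show η [false] + Lfun (fun t => η (true :: t)) s + η (true :: s) ≤ η []
        have := h.2
        linarith

lemma seqD_set_eq : ∀ (s : List Bool) (η : List Bool → ℝ), Good η →
    {x : ℝ | 0 ≤ x ∧ x < η [] ∧ ∀ i < s.length, seqD η x i = s.getD i false} =
      Ico (Lfun η s) (Lfun η s + η s) := by
  intro s
  induction s with
  | nil =>
    intro η hη
    ext x
    simp [Lfun]
  | cons b s ih =>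
    intro η hη
    have hsplit := hη.split
    have htnn := hη.1 [true]
    have hfnn := hη.1 [false]
    ext x
    simp only [mem_setOf_eq, mem_Ico, List.length_cons]
    cases b
    · -- b = false
      have ihx := Set.ext_iff.1 (ih _ (hη.cons false)) x
      simp only [mem_setOf_eq, mem_Ico] at ihx
      constructor
      · rintro ⟨hx0, hx1, hd⟩
        have h0 := hd 0 (Nat.succ_pos _)
        have hlt : x < η [false] := by
          simpa [seqD, decide_eq_false_iff_not] using h0
        have : Lfun (fun t => η (false :: t)) s ≤ x ∧
            x < Lfun (fun t => η (false :: t)) s + η (false :: s) := by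
          refine ihx.1 ⟨hx0, hlt, fun i hi => ?_⟩
          have := hd (i+1) (by omega)
          simpa [seqD, hlt] using this
        simpa [Lfun] using this
      · intro hx
        have hx' : Lfun (fun t => η (false :: t)) s ≤ x ∧
            x < Lfun (fun t => η (false :: t)) s + η (false :: s) := by
          simpa [Lfun] using hx
        obtain ⟨hx0, hlt, hd⟩ := ihx.2 hx'
        have hlt' : x < η [false] := hlt
        refine ⟨hx0, by linarith, fun i hi => ?_⟩
        cases i with
        | zero => simp [seqD, not_le.2 hlt']
        | succ i => simpa [seqD, hlt'] using hd i (by omega)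
    · -- b = true
      have ihx := Set.ext_iff.1 (ih _ (hη.cons true)) (x - η [false])
      simp only [mem_setOf_eq, mem_Ico] at ihx
      constructor
      · rintro ⟨hx0, hx1, hd⟩
        have h0 := hd 0 (Nat.succ_pos _)
        have hge : η [false] ≤ x := by
          simpa [seqD, decide_eq_true_eq] using h0
        have hnlt : ¬ x < η [false] := not_lt.2 hge
        have : Lfun (fun t => η (true :: t)) s ≤ x - η [false] ∧
            x - η [false] < Lfun (fun t => η (true :: t)) s + η (true :: s) := by
          refine ihx.1 ⟨by linarith, show x - η [false] < η [true] by linarith, fun i hi => ?_⟩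
          have := hd (i+1) (by omega)
          simpa [seqD, hnlt] using this
        simp only [Lfun]
        constructor <;> linarith [this.1, this.2]
      · intro hx
        have hx' : Lfun (fun t => η (true :: t)) s ≤ x - η [false] ∧
            x - η [false] < Lfun (fun t => η (true :: t)) s + η (true :: s) := by
          simp only [Lfun] at hx
          constructor <;> linarith [hx.1, hx.2]
        obtain ⟨hy0, hy1, hd⟩ := ihx.2 hx'
        have hy1' : x - η [false] < η [true] := hy1
        have hge : η [false] ≤ x := by linarith
        have hnlt : ¬ x < η [false] := not_lt.2 hge
        refine ⟨by linarith, by linarith [hy1'], fun i hi => ?_⟩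
        cases i with
        | zero => simp [seqD, hge]
        | succ i => simpa [seqD, hnlt] using hd i (by omega)

lemma iInter_range_succ' {Ω : Type*} (f : ℕ → Set Ω) (n : ℕ) :
    ⋂ i ∈ Finset.range (n+1), f i = f 0 ∩ ⋂ i ∈ Finset.range n, f (i+1) := by
  ext x
  simp only [mem_iInter, Finset.mem_range, mem_inter_iff]
  constructor
  · intro h; exact ⟨h 0 (by omega), fun i hi => h (i+1) (by omega)⟩
  · rintro ⟨h0, h⟩ i hi
    cases i with
    | zero => exact h0
    | succ i => exact h i (by omega)

/-- Every shift-invariant function `η` from finite binary strings to `[0,1]` is realised by a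
sequence of events in some probability space: there are a probability space `(Ω, μ)` and
measurable sets `(a_m)` such that `μ(⋂_{i<n} a_{k+i}^{s_i}) = η_s` for every `k` and every
string `s` of length `n` (where `a⁰ = a`, corresponding to the digit `false`, and `a¹ = aᶜ`,
corresponding to the digit `true`). -/
theorem shift_invariant_realised (η : List Bool → ℝ)
    (hrange : ∀ s, η s ∈ Icc (0 : ℝ) 1)
    (hempty : η [] = 1)
    (hshift : ∀ s : List Bool,
      η (s ++ [false]) + η (s ++ [true]) = η s ∧ η (false :: s) + η (true :: s) = η s) :
    ∃ (Ω : Type) (_ : MeasurableSpace Ω) (μ : Measure Ω), IsProbabilityMeasure μ ∧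
      ∃ a : ℕ → Set Ω, (∀ m, MeasurableSet (a m)) ∧
        ∀ (k : ℕ) (s : List Bool),
          μ (⋂ i ∈ Finset.range s.length,
              if s.getD i false then (a (k + i))ᶜ else a (k + i)) =
            ENNReal.ofReal (η s) := by
  have hη : Good η := ⟨fun t => (hrange t).1, fun t => (hshift t).1⟩
  refine ⟨ℝ, inferInstance, volume.restrict (Ico (0:ℝ) 1), ?_, ?_⟩
  · constructor
    rw [Measure.restrict_apply_univ, Real.volume_Ico]
    norm_num
  set a : ℕ → Set ℝ := fun m => {x | seqD η x m = false} with ha_def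
  have hameas : ∀ m, MeasurableSet (a m) := fun m => measurableSet_seqD m η false
  refine ⟨a, hameas, ?_⟩
  have hmem : ∀ (x : ℝ) (k i : ℕ) (s : List Bool),
      (x ∈ (if s.getD i false then (a (k+i))ᶜ else a (k+i))) ↔
        seqD η x (k+i) = s.getD i false := by
    intro x k i s
    cases h : s.getD i false <;> simp [ha_def, h]
  have hpiecemeas : ∀ (k i : ℕ) (s : List Bool),
      MeasurableSet (if s.getD i false then (a (k+i))ᶜ else a (k+i)) := by
    intro k i s
    split
    · exact (hameas _).compl
    · exact hameas _
  have hsetmeas : ∀ (k : ℕ) (s : List Bool),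
      MeasurableSet (⋂ i ∈ Finset.range s.length,
        if s.getD i false then (a (k + i))ᶜ else a (k + i)) := by
    intro k s
    exact MeasurableSet.biInter (Finset.range s.length).countable_toSet
      fun i _ => hpiecemeas k i s
  -- base case k = 0
  have base : ∀ s : List Bool,
      (volume.restrict (Ico (0:ℝ) 1)) (⋂ i ∈ Finset.range s.length,
        if s.getD i false then (a (0 + i))ᶜ else a (0 + i)) = ENNReal.ofReal (η s) := by
    intro s
    rw [Measure.restrict_apply (hsetmeas 0 s)]
    have hseteq : (⋂ i ∈ Finset.range s.length,
        if s.getD i false then (a (0 + i))ᶜ else a (0 + i)) ∩ Ico (0:ℝ) 1 =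
        {x : ℝ | 0 ≤ x ∧ x < η [] ∧ ∀ i < s.length, seqD η x i = s.getD i false} := by
      ext x
      simp only [mem_inter_iff, mem_iInter, Finset.mem_range, mem_Ico, mem_setOf_eq, hempty]
      constructor
      · rintro ⟨h1, h2, h3⟩
        exact ⟨h2, h3, fun i hi => by simpa using (hmem x 0 i s).1 (h1 i hi)⟩
      · rintro ⟨h1, h2, h3⟩
        exact ⟨fun i hi => (hmem x 0 i s).2 (by simpa using h3 i hi), h1, h2⟩
    rw [hseteq, seqD_set_eq s η hη, Real.volume_Ico]
    ring_nf
  -- induction on k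
  intro k
  induction k with
  | zero => exact base
  | succ k ih =>
    intro s
    set A := ⋂ i ∈ Finset.range s.length,
        if s.getD i false then (a (k + 1 + i))ᶜ else a (k + 1 + i) with hA
    have hAmeas : MeasurableSet A := hsetmeas (k+1) s
    have hcons : ∀ b : Bool,
        (⋂ i ∈ Finset.range (b :: s).length,
          if (b :: s).getD i false then (a (k + i))ᶜ else a (k + i)) =
        (if b then (a k)ᶜ else a k) ∩ A := by
      intro b
      rw [show (b :: s).length = s.length + 1 from rfl,
        iInter_range_succ' (fun i => if (b :: s).getD i false then (a (k + i))ᶜ else a (k + i))]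
      have e1 : (if (b :: s).getD 0 false then (a (k+0))ᶜ else a (k+0)) =
          (if b then (a k)ᶜ else a k) := by simp
      have e2 : (⋂ i ∈ Finset.range s.length,
          if (b :: s).getD (i+1) false then (a (k+(i+1)))ᶜ else a (k+(i+1))) = A := by
        refine Set.iInter₂_congr fun i hi => ?_
        rw [show (b :: s).getD (i+1) false = s.getD i false from rfl,
          show k + (i + 1) = k + 1 + i from by omega]
      rw [e1, e2]
    have hdisj : Disjoint ((a k) ∩ A) ((a k)ᶜ ∩ A) :=
      disjoint_compl_right.mono inter_subset_left inter_subset_left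
    have hunion : ((a k) ∩ A) ∪ ((a k)ᶜ ∩ A) = A := by
      rw [inter_comm, inter_comm ((a k)ᶜ), ← Set.inter_union_distrib_left,
        Set.union_compl_self, Set.inter_univ]
    have hmes : (volume.restrict (Ico (0:ℝ) 1)) A =
        (volume.restrict (Ico (0:ℝ) 1)) ((a k) ∩ A) +
        (volume.restrict (Ico (0:ℝ) 1)) ((a k)ᶜ ∩ A) := by
      conv_lhs => rw [← hunion]
      exact measure_union hdisj ((hameas k).compl.inter hAmeas)
    have hf := ih (false :: s)
    have ht := ih (true :: s)
    have e3 : (if (true:Bool) = true then (a k)ᶜ else a k) = (a k)ᶜ := by simp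
    have e4 : (if (false:Bool) = true then (a k)ᶜ else a k) = a k := by simp
    rw [hcons false, e4] at hf
    rw [hcons true, e3] at ht
    rw [hmes, hf, ht, ← ENNReal.ofReal_add ((hrange _).1) ((hrange _).1), (hshift s).2]
end
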